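/- arXiv:2411.15520 — 3 statements merged into one kernel-verified Lean document; each statement's English description precedes it below -/
import Mathlib

section
/- For a partition μ in the m×n rectangle, removable Dyck paths of μ are in bijection with anticlockwise arcs (cups) in the oriented diagram μ̲μ: a removable Dyck path P corresponds to a cup with endpoints at positions first(P) and last(P). -/
namespace ArcPaper

/-- The content of a tile `(r, c)` (row `r`, column `c`, both `1`-indexed). -/
def cont (t : ℕ × ℕ) : ℤ := (t.1 : ℤ) - (t.2 : ℤ)

/-- `r + c - 1`, so that the height of the tile `(r, c)` in the `m × n` rectangle is
`lev t - m`. -/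
def lev (t : ℕ × ℕ) : ℤ := (t.1 : ℤ) + (t.2 : ℤ) - 1

/-- The Young diagram of a partition `μ` (given as the function `r ↦ μ r`, `1`-indexed). -/
def diagram (μ : ℕ → ℕ) : Set (ℕ × ℕ) := {t | 1 ≤ t.1 ∧ 1 ≤ t.2 ∧ t.2 ≤ μ t.1}

/-- A partition in the `m × n` rectangle: weakly decreasing, parts `≤ m`, at most `n` rows. -/
def IsPtn (m n : ℕ) (μ : ℕ → ℕ) : Prop :=
  (∀ i j, 1 ≤ i → i ≤ j → μ j ≤ μ i) ∧ μ 1 ≤ m ∧ ∀ r, n < r → μ r = 0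

/-- One step of a path: the next tile is `(r+1, c)` or `(r, c-1)`. -/
def IsStep (a b : ℕ × ℕ) : Prop := b = (a.1 + 1, a.2) ∨ (2 ≤ a.2 ∧ b = (a.1, a.2 - 1))

/-- `S` is the tile set of a (representative of a) Dyck path with first content `f`, last
content `l`, and height `h`, inside the `m × n` rectangle. -/
def IsDyckRep (m : ℕ) (S : Set (ℕ × ℕ)) (f l h : ℤ) : Prop :=
  ∃ (s : ℕ) (hs : 0 < s) (p : Fin s → ℕ × ℕ),
    Function.Injective p ∧ Set.range p = S ∧
    (∀ i : Fin s, ∀ hi : i.1 + 1 < s, IsStep (p i) (p ⟨i.1 + 1, hi⟩)) ∧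
    (∀ i : Fin s, lev (p ⟨0, hs⟩) ≤ lev (p i)) ∧
    (∀ i : Fin s, lev (p ⟨s - 1, Nat.sub_lt hs Nat.one_pos⟩) ≤ lev (p i)) ∧
    cont (p ⟨0, hs⟩) = f ∧ cont (p ⟨s - 1, Nat.sub_lt hs Nat.one_pos⟩) = l ∧
    lev (p ⟨0, hs⟩) - (m : ℤ) = h

/-- `ν` is obtained from `μ` by removing a Dyck path with contents `[f, l]` and height `h`. -/
def RemovesH (m n : ℕ) (μ : ℕ → ℕ) (f l h : ℤ) (ν : ℕ → ℕ) : Prop :=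
  ∃ S : Set (ℕ × ℕ), IsDyckRep m S f l h ∧ S ⊆ diagram μ ∧ IsPtn m n ν ∧
    diagram ν = diagram μ \ S

/-- `ν` is obtained from `μ` by removing a Dyck path with contents `[f, l]`. -/
def Removes (m n : ℕ) (μ : ℕ → ℕ) (f l : ℤ) (ν : ℕ → ℕ) : Prop :=
  ∃ h, RemovesH m n μ f l h ν

/-- The Dyck path with contents `[f, l]` is removable from `μ`, with height `h`. -/
def DRemH (m n : ℕ) (μ : ℕ → ℕ) (f l h : ℤ) : Prop := ∃ ν, RemovesH m n μ f l h ν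

/-- The Dyck path with contents `[f, l]` is removable from `μ`. -/
def DRem (m n : ℕ) (μ : ℕ → ℕ) (f l : ℤ) : Prop := ∃ ν, Removes m n μ f l ν

/-- The Dyck path with contents `[f, l]` is addable to `μ`, with height `h`. -/
def DAddH (m n : ℕ) (μ : ℕ → ℕ) (f l h : ℤ) : Prop :=
  ∃ ν, IsPtn m n ν ∧ RemovesH m n ν f l h μ

/-- The Dyck path with contents `[f, l]` is addable to `μ`. -/
def DAdd (m n : ℕ) (μ : ℕ → ℕ) (f l : ℤ) : Prop := ∃ h, DAddH m n μ f l h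

/-- Two removable Dyck paths of `μ` commute: each remains removable after the other has been
removed. -/
def DyckCommute (m n : ℕ) (μ : ℕ → ℕ) (P Q : ℤ × ℤ) : Prop :=
  (∃ ν, Removes m n μ P.1 P.2 ν ∧ DRem m n ν Q.1 Q.2) ∧
  (∃ ν, Removes m n μ Q.1 Q.2 ν ∧ DRem m n ν P.1 P.2)

/-- `P ≺ Q`: the Dyck path `Q` covers `P`, i.e. `first(Q) < first(P)` and
`last(P) < last(Q)`. -/
def DyckLt (P Q : ℤ × ℤ) : Prop := Q.1 < P.1 ∧ P.2 < Q.2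

/-- Two Dyck paths (as content intervals) are adjacent: the disjoint union of their content
multisets is an interval. -/
def DyckAdj (P Q : ℤ × ℤ) : Prop := P.2 + 1 = Q.1 ∨ Q.2 + 1 = P.1

/-- Two Dyck paths (as content intervals) are distant: all their contents differ by `≥ 2`. -/
def DyckDistant (P Q : ℤ × ℤ) : Prop := P.2 + 2 ≤ Q.1 ∨ Q.2 + 2 ≤ P.1

/-- The breadth `b(P) = (last(P) - first(P))/2 + 1` of a Dyck path. -/
def brN (P : ℤ × ℤ) : ℕ := ((P.2 - P.1) / 2 + 1).toNat

/-- A Dyck tiling of the skew shape `mu \ lam`: a finite set `T` of Dyck paths (identified by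
their content intervals), together with a choice `S` of tile-set representatives, which
partition `mu \ lam` and are pairwise nested or distant. -/
def IsDyckTiling (m n : ℕ) (lam mu : ℕ → ℕ) (T : Finset (ℤ × ℤ))
    (S : ℤ × ℤ → Set (ℕ × ℕ)) : Prop :=
  (∀ q ∈ T, ∃ h, IsDyckRep m (S q) q.1 q.2 h) ∧
  (∀ q ∈ T, ∀ q' ∈ T, q ≠ q' → Disjoint (S q) (S q')) ∧
  ((⋃ q ∈ T, S q) = diagram mu \ diagram lam) ∧
  (∀ q ∈ T, ∀ q' ∈ T, q ≠ q' → DyckLt q q' ∨ DyckLt q' q ∨ DyckDistant q q')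

/-- The staircase partition `(d, d-1, …, 2, 1)` is contained in `μ`. -/
def HasStaircase (d : ℕ) (μ : ℕ → ℕ) : Prop := ∀ i, 1 ≤ i → i ≤ d → d + 1 - i ≤ μ i

/-- `μ` has defect `d - m`: `d` is maximal with the staircase `(d, …, 1)` contained in `μ`. -/
def DefectIs (m : ℕ) (μ : ℕ → ℕ) (d : ℕ) : Prop :=
  HasStaircase d μ ∧ ¬ HasStaircase (d + 1) μ

/-- A regular partition of the `m × n` rectangle: a partition of defect `0`. -/
def Regular (m n : ℕ) (μ : ℕ → ℕ) : Prop := IsPtn m n μ ∧ DefectIs m μ m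

/-- The conjugate partition: `conj n μ i` is the number of (the at most `n`) rows of `μ` with
at least `i` boxes. -/
def conj (n : ℕ) (μ : ℕ → ℕ) (i : ℕ) : ℕ := ((Finset.Icc 1 n).filter fun r => i ≤ μ r).card

/-- Point `j ∈ {1, …, m+n}` of the weight of `μ` is labelled `∧`. -/
def IsUpPt (m n : ℕ) (μ : ℕ → ℕ) (j : ℤ) : Prop :=
  ∃ i : ℕ, 1 ≤ i ∧ i ≤ m ∧ j = (m : ℤ) + 1 - (i : ℤ) + (conj n μ i : ℤ)

/-- The number of `∧`-labelled points in positions `[a, b]` of the weight of `μ`. -/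
noncomputable def upCount (m n : ℕ) (μ : ℕ → ℕ) (a b : ℤ) : ℕ :=
  {j : ℤ | a ≤ j ∧ j ≤ b ∧ IsUpPt m n μ j}.ncard

/-- The number of `∨`-labelled points in positions `[a, b]` of the weight of `μ`. -/
noncomputable def downCount (m n : ℕ) (μ : ℕ → ℕ) (a b : ℤ) : ℕ :=
  {j : ℤ | a ≤ j ∧ j ≤ b ∧ ¬ IsUpPt m n μ j}.ncard

/-- `(i, j)` is a cup of the cup diagram `μ̲`: point `i` is `∨`, point `j` is `∧`, and the
points strictly between `i` and `j` form a balanced, completely matched configuration. -/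
def IsCup (m n : ℕ) (μ : ℕ → ℕ) (i j : ℤ) : Prop :=
  1 ≤ i ∧ j ≤ (m : ℤ) + (n : ℤ) ∧ i < j ∧ ¬ IsUpPt m n μ i ∧ IsUpPt m n μ j ∧
  upCount m n μ (i + 1) (j - 1) = downCount m n μ (i + 1) (j - 1) ∧
  ∀ k : ℤ, i < k → k < j → upCount m n μ (i + 1) k ≤ downCount m n μ (i + 1) k

/-- `R = rt(Q)`: the maximal-breadth element of the set of addable Dyck paths of `lam` of
height `1` lying strictly to the right of `Q`. -/
def IsRt (m n : ℕ) (lam : ℕ → ℕ) (Q R : ℤ × ℤ) : Prop :=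
  DAddH m n lam R.1 R.2 1 ∧ Q.2 < R.1 ∧
  ∀ R' : ℤ × ℤ, DAddH m n lam R'.1 R'.2 1 → Q.2 < R'.1 → brN R' ≤ brN R

/-- `R = ⟨P ∪ Q⟩_μ`: the smallest removable Dyck path of `μ` containing `P ∪ Q`. -/
def IsMerge (m n : ℕ) (μ : ℕ → ℕ) (P Q R : ℤ × ℤ) : Prop :=
  DRem m n μ R.1 R.2 ∧ R.1 ≤ P.1 ∧ P.2 ≤ R.2 ∧ R.1 ≤ Q.1 ∧ Q.2 ≤ R.2 ∧
  ∀ R' : ℤ × ℤ, DRem m n μ R'.1 R'.2 → R'.1 ≤ P.1 → P.2 ≤ R'.2 → R'.1 ≤ Q.1 → Q.2 ≤ R'.2 →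
    R'.1 ≤ R.1 ∧ R.2 ≤ R'.2

end ArcPaper

open ArcPaper

open ArcPaper

def Cond (m n : ℕ) (μ : ℕ → ℕ) (f l : ℤ) : Prop :=
  ∃ ρ k : ℕ, 1 ≤ ρ ∧ ρ + k ≤ n ∧ f = (ρ : ℤ) - (μ ρ : ℤ) ∧ l = f + 2 * k ∧
    (∀ j : ℕ, 1 ≤ j → j ≤ k → (μ ρ : ℤ) + 1 ≤ (μ (ρ + j) : ℤ) + (j : ℤ)) ∧
    ((μ (ρ + k + 1) : ℤ) + (k : ℤ) + 1 ≤ (μ ρ : ℤ))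

theorem drem_of_cond {m n : ℕ} {μ : ℕ → ℕ} {f l : ℤ} (hμ : IsPtn m n μ)
    (h : Cond m n μ f l) : DRem m n μ f l := by
  classical
  obtain ⟨ρ, k, hρ1, hρk, hf, hl, hii, hiv⟩ := h
  obtain ⟨hmono, hm, hn⟩ := hμ
  set σ := ρ + k with hσ
  have hμρk : k + 1 ≤ μ ρ := by
    have h0 : (0:ℤ) ≤ (μ (ρ+k+1) : ℤ) := Int.natCast_nonneg _
    omega
  -- band inequality
  have hband : ∀ r, ρ < r → r ≤ σ → μ ρ + ρ + 1 ≤ μ r + r := by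
    intro r h1 h2
    have h3 := hii (r - ρ) (by omega) (by omega)
    rw [show ρ + (r - ρ) = r from by omega] at h3
    have : ((r - ρ : ℕ) : ℤ) = (r : ℤ) - (ρ : ℤ) := by omega
    omega
  set L : ℕ → ℕ := fun r => if r < σ then μ (r+1) else μ ρ - k with hLdef
  have hLlev : ∀ r, ρ ≤ r → r ≤ σ → μ ρ + ρ ≤ L r + r := by
    intro r h1 h2
    by_cases hc : r < σ
    · have := hband (r+1) (by omega) (by omega)
      simp only [hLdef, if_pos hc]; omega
    · have : r = σ := by omega
      simp only [hLdef, if_neg hc]; omega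
  have hLμ : ∀ r, ρ ≤ r → r ≤ σ → L r ≤ μ r := by
    intro r h1 h2
    by_cases hc : r < σ
    · simp only [hLdef, if_pos hc]; exact hmono r (r+1) (by omega) (by omega)
    · have hr : r = σ := by omega
      simp only [hLdef, if_neg hc]
      rw [hr]
      by_cases hk : k = 0
      · rw [show σ = ρ from by omega]; omega
      · have := hband σ (by omega) (by omega); omega
  have hL1 : ∀ r, ρ ≤ r → r ≤ σ → 1 ≤ L r := by
    intro r h1 h2; have := hLlev r h1 h2; omega
  set S : Set (ℕ × ℕ) := {t | ρ ≤ t.1 ∧ t.1 ≤ σ ∧ L t.1 ≤ t.2 ∧ t.2 ≤ μ t.1} with hSdef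
  have hSmem : ∀ a b : ℕ, ((a, b) ∈ S) ↔ (ρ ≤ a ∧ a ≤ σ ∧ L a ≤ b ∧ b ≤ μ a) := by
    intro a b; rw [hSdef]; simp only [Set.mem_setOf_eq]
  have hcont2 : ∀ a b : ℕ, cont (a, b) = (a : ℤ) - (b : ℤ) := fun _ _ => rfl
  have hcontS : ∀ t ∈ S, f ≤ cont t ∧ cont t ≤ l := by
    rintro t ⟨h1, h2, h3, h4⟩
    have hmr : μ t.1 ≤ μ ρ := hmono ρ t.1 hρ1 h1
    have hlev := hLlev t.1 h1 h2
    simp only [cont]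
    constructor
    · omega
    · -- cont = r - c ≤ r - L r ≤ 2r - ρ - μρ ≤ 2σ - ρ - μρ = l
      have : l = (ρ:ℤ) - μ ρ + 2 * k := by rw [hl, hf]
      omega
  have huniq : ∀ t ∈ S, ∀ t' ∈ S, cont t = cont t' → t = t' := by
    have key : ∀ t ∈ S, ∀ t' ∈ S, t.1 < t'.1 → cont t = cont t' → False := by
      rintro t ⟨h1, h2, h3, h4⟩ t' ⟨h1', h2', h3', h4'⟩ hlt hcont
      have hrσ : t.1 < σ := by omega
      have hLr : L t.1 = μ (t.1+1) := by simp only [hLdef, if_pos hrσ]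
      have hmr : μ t'.1 ≤ μ (t.1+1) := hmono (t.1+1) t'.1 (by omega) (by omega)
      simp only [cont] at hcont
      omega
    rintro t ht t' ht' hcont
    rcases lt_trichotomy t.1 t'.1 with h | h | h
    · exact absurd (key t ht t' ht' h hcont) (by simp)
    · have : t.2 = t'.2 := by
        simp only [cont] at hcont; omega
      exact Prod.ext h this
    · exact absurd (key t' ht' t ht h hcont.symm) (by simp)
  -- the path
  set q : ℕ → ℕ × ℕ := fun i => Nat.rec (ρ, μ ρ)
    (fun _ t => if t.1 < σ ∧ μ (t.1+1) = t.2 then (t.1+1, t.2) else (t.1, t.2 - 1)) i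
    with hqdef
  have hq0 : q 0 = (ρ, μ ρ) := rfl
  have hqsucc : ∀ i, q (i+1) =
      if (q i).1 < σ ∧ μ ((q i).1+1) = (q i).2 then ((q i).1+1, (q i).2)
      else ((q i).1, (q i).2 - 1) := fun i => rfl
  have hqInv : ∀ i, i ≤ 2*k → q i ∈ S ∧ cont (q i) = f + i := by
    intro i
    induction i with
    | zero =>
      intro _
      rw [hq0, hSmem, hcont2]
      refine ⟨⟨le_refl _, by omega, hLμ ρ (le_refl _) (by omega), le_refl _⟩, by rw [hf]; simp⟩
    | succ i ih =>
      intro hi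
      obtain ⟨hmem, hcont⟩ := ih (by omega)
      rcases hqi : q i with ⟨r, c⟩
      simp only [hqi, hSmem, hcont2] at hmem hcont
      obtain ⟨h1, h2, h3, h4⟩ := hmem
      rw [hqsucc]
      simp only [hqi]
      by_cases hc : r < σ ∧ μ (r+1) = c
      · rw [if_pos hc]
        simp only [hSmem, hcont2]
        refine ⟨⟨by omega, by omega, ?_, by omega⟩, by push_cast; omega⟩
        exact le_trans (hLμ (r + 1) (by omega) (by omega)) (by omega)
      · rw [if_neg hc]
        -- c ≥ L r + 1
        have hcc : L r + 1 ≤ c := by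
          rcases Nat.lt_or_ge r σ with hr | hr
          · have hLr : L r = μ (r+1) := by simp only [hLdef, if_pos hr]
            rcases Nat.eq_or_lt_of_le h3 with he | hlt
            · exfalso; exact hc ⟨hr, by omega⟩
            · omega
          · -- r = σ, content < l rules out c = L σ
            have hrσ : r = σ := by omega
            have hLr : L r = μ ρ - k := by simp only [hLdef, hrσ, if_neg (lt_irrefl σ)]
            rcases Nat.eq_or_lt_of_le h3 with he | hlt
            · exfalso
              have hcl : ((r : ℤ) - c) = l := by
                rw [hl, hf]; omega
              omega
            · omega
        simp only [hSmem, hcont2]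
        have hL1' := hL1 r h1 h2
        refine ⟨⟨h1, h2, by omega, by omega⟩, by push_cast; omega⟩
  -- last tile
  have hlast : q (2*k) = (σ, μ ρ - k) := by
    have h1 := hqInv (2*k) (le_refl _)
    have h2 : (σ, μ ρ - k) ∈ S := by
      rw [hSmem]
      refine ⟨by omega, le_refl _, ?_, ?_⟩
      · simp only [hLdef, if_neg (lt_irrefl σ)]; exact le_refl _
      · have := hLμ σ (by omega) (le_refl _)
        simp only [hLdef, if_neg (lt_irrefl σ)] at this; exact this
    have h3 : cont (σ, μ ρ - k) = f + (2*k : ℕ) := by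
      rw [hcont2, hf]; push_cast; omega
    exact huniq _ h1.1 _ h2 (by rw [h1.2, h3])
  have hlev0 : ∀ t ∈ S, lev (q 0) ≤ lev t := by
    rintro t ⟨h1, h2, h3, h4⟩
    have := hLlev t.1 h1 h2
    simp only [lev, hq0]; omega
  have hlevlast : lev (q (2*k)) = lev (q 0) := by
    rw [hlast, hq0]; simp only [lev]; omega
  -- IsDyckRep
  have hdyck : IsDyckRep m S f l ((lev (q 0)) - m) := by
    refine ⟨2*k+1, by omega, fun i => q i.1, ?_, ?_, ?_, ?_, ?_, ?_, ?_, rfl⟩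
    · intro a b hab
      have hab2 : q a.1 = q b.1 := hab
      have ha := (hqInv a.1 (by omega)).2
      have hb := (hqInv b.1 (by omega)).2
      rw [hab2] at ha
      rw [ha] at hb
      have : (a.1 : ℤ) = b.1 := by omega
      exact Fin.ext (by omega)
    · ext t
      constructor
      · rintro ⟨i, rfl⟩; exact (hqInv i.1 (by omega)).1
      · intro ht
        obtain ⟨hgf, hgl⟩ := hcontS t ht
        have hkl : l = f + 2*(k:ℤ) := by rw [hl]
        set i : ℕ := (cont t - f).toNat with hi
        have hik : i ≤ 2*k := by omega
        have hq := hqInv i hik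
        refine ⟨⟨i, by omega⟩, ?_⟩
        show q i = t
        exact huniq _ hq.1 _ ht (by rw [hq.2]; omega)
    · intro i hi
      have h1 := (hqInv i.1 (by omega)).1
      have h2 := (hqInv (i.1+1) (by omega)).1
      simp only
      rcases hqi : q i.1 with ⟨r, c⟩
      simp only [hqi, hSmem] at h1
      rw [hqsucc] at h2 ⊢
      simp only [hqi] at h2 ⊢
      by_cases hc : r < σ ∧ μ (r+1) = c
      · rw [if_pos hc]; exact Or.inl rfl
      · rw [if_neg hc] at h2 ⊢
        simp only [hSmem] at h2
        have := hL1 r h1.1 h1.2.1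
        refine Or.inr ⟨by omega, rfl⟩
    · intro i; exact hlev0 _ (hqInv i.1 (by omega)).1
    · intro i
      simp only [show 2*k+1-1 = 2*k from by omega]
      rw [hlevlast]
      exact hlev0 _ (hqInv i.1 (by omega)).1
    · exact (hqInv 0 (by omega)).2.trans (by simp)

    · simp only [show 2*k+1-1 = 2*k from by omega]
      rw [(hqInv (2*k) (le_refl _)).2, hl]; push_cast; ring
  -- the new partition
  set ν : ℕ → ℕ := fun r => if ρ ≤ r ∧ r ≤ σ then L r - 1 else μ r with hνdef
  have hνμ : ∀ r, 1 ≤ r → ν r ≤ μ r := by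
    intro r h1
    simp only [hνdef]
    by_cases hb : ρ ≤ r ∧ r ≤ σ
    · rw [if_pos hb]; have := hLμ r hb.1 hb.2; omega
    · rw [if_neg hb]
  have hLmono : ∀ r, ρ ≤ r → r + 1 ≤ σ → L (r+1) ≤ L r := by
    intro r h1 h2
    have hLr : L r = μ (r+1) := by simp only [hLdef, if_pos (show r < σ by omega)]
    by_cases hc : r + 1 < σ
    · have hLr1 : L (r+1) = μ (r+1+1) := by simp only [hLdef, if_pos hc]
      rw [hLr, hLr1]
      exact hmono (r+1) (r+1+1) (by omega) (by omega)
    · have h3 := hLμ (r+1) (by omega) (by omega)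
      omega
  have hνadj : ∀ r, 1 ≤ r → ν (r+1) ≤ ν r := by
    intro r h1
    by_cases hb : ρ ≤ r ∧ r ≤ σ
    · by_cases hb' : r + 1 ≤ σ
      · simp only [hνdef, if_pos hb, if_pos (⟨by omega, hb'⟩ : ρ ≤ r+1 ∧ r+1 ≤ σ)]
        have := hLmono r hb.1 hb'
        omega
      · -- r = σ
        have hrσ : r = σ := by omega
        simp only [hνdef, if_pos hb, if_neg (by omega : ¬(ρ ≤ r+1 ∧ r+1 ≤ σ))]
        subst hrσ
        simp only [hLdef, if_neg (lt_irrefl σ)]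
        have : μ (σ + 1) + k + 1 ≤ μ ρ := by
          have := hiv; omega
        omega
    · have h2 : ν (r+1) ≤ μ (r+1) := hνμ (r+1) (by omega)
      have h3 : μ (r+1) ≤ μ r := hmono r (r+1) h1 (by omega)
      have h4 : ν r = μ r := by simp only [hνdef, if_neg hb]
      omega
  have hνanti : ∀ i j, 1 ≤ i → i ≤ j → ν j ≤ ν i := by
    intro i j h1 h2
    induction j with
    | zero => omega
    | succ j ih =>
      rcases Nat.eq_or_lt_of_le h2 with he | hlt
      · rw [he]
      · exact le_trans (hνadj j (by omega)) (ih (by omega))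
  have hνptn : IsPtn m n ν := by
    refine ⟨hνanti, le_trans (hνμ 1 (le_refl _)) hm, ?_⟩
    intro r hr
    have : ¬(ρ ≤ r ∧ r ≤ σ) := by omega
    simp only [hνdef, if_neg this]
    exact hn r hr
  have hSsub : S ⊆ diagram μ := by
    rintro t ⟨h1, h2, h3, h4⟩
    exact ⟨by omega, le_trans (hL1 t.1 h1 h2) h3, h4⟩
  have hdiag : diagram ν = diagram μ \ S := by
    ext ⟨r, c⟩
    simp only [diagram, Set.mem_setOf_eq, Set.mem_diff, hSdef, hνdef]
    by_cases hb : ρ ≤ r ∧ r ≤ σ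
    · rw [if_pos hb]
      have h1 := hL1 r hb.1 hb.2
      have h2 := hLμ r hb.1 hb.2
      constructor
      · rintro ⟨g1, g2, g3⟩
        exact ⟨⟨g1, g2, by omega⟩, by omega⟩
      · rintro ⟨⟨g1, g2, g3⟩, g4⟩
        refine ⟨g1, g2, by omega⟩
    · rw [if_neg hb]
      constructor
      · rintro ⟨g1, g2, g3⟩
        exact ⟨⟨g1, g2, g3⟩, by omega⟩
      · rintro ⟨⟨g1, g2, g3⟩, _⟩
        exact ⟨g1, g2, g3⟩
  exact ⟨ν, lev (q 0) - m, S, hdyck, hSsub, hνptn, hdiag⟩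

theorem cond_of_drem {m n : ℕ} {μ : ℕ → ℕ} {f l : ℤ} (hμ : IsPtn m n μ)
    (h : DRem m n μ f l) : Cond m n μ f l := by
  obtain ⟨ν, h0, S, hdyck, hSsub, hνptn, hdiag⟩ := h
  obtain ⟨hmono, hm, hn⟩ := hμ
  obtain ⟨hνmono, hνm, hνn⟩ := hνptn
  obtain ⟨s, hs, p, hinj, hrange, hstep, hlev0, hlevl, hcf, hcl, hh⟩ := hdyck
  have hSeq : ∀ t : ℕ × ℕ, t ∈ S ↔ 1 ≤ t.1 ∧ ν t.1 < t.2 ∧ t.2 ≤ μ t.1 := by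
    intro t
    constructor
    · intro htS
      have h1 : t ∈ diagram μ := hSsub htS
      have h2 : t ∉ diagram ν := by
        intro hc
        rw [hdiag] at hc
        exact hc.2 htS
      simp only [diagram, Set.mem_setOf_eq] at h1 h2
      omega
    · intro ht
      by_contra hc
      have h1 : t ∈ diagram μ \ S := by
        refine ⟨?_, hc⟩
        simp only [diagram, Set.mem_setOf_eq]
        omega
      rw [← hdiag] at h1
      simp only [diagram, Set.mem_setOf_eq] at h1
      omega
  have hSeqP : ∀ a b : ℕ, ((a, b) ∈ S) ↔ 1 ≤ a ∧ ν a < b ∧ b ≤ μ a := by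
    intro a b; simpa using hSeq (a, b)
  have hstep_cont : ∀ a b : ℕ × ℕ, IsStep a b → cont b = cont a + 1 := by
    rintro a b (hb | ⟨h2, hb⟩) <;> subst hb <;> simp only [cont] <;> omega
  have hcontp : ∀ j : ℕ, ∀ hj : j < s, cont (p ⟨j, hj⟩) = f + j := by
    intro j
    induction j with
    | zero => intro hj; simpa using hcf
    | succ j ih =>
      intro hj
      have hst := hstep ⟨j, by omega⟩ (by exact hj)
      rw [hstep_cont _ _ hst] at *
      rw [ih (by omega)]
      push_cast; ring
  have hcontpF : ∀ i : Fin s, cont (p i) = f + i.1 := fun i => hcontp i.1 i.2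
  have hl2 : l = f + ((s : ℤ) - 1) := by
    rw [← hcl]
    have h1 := hcontp (s-1) (Nat.sub_lt hs Nat.one_pos)
    rw [h1]
    omega
  have hfl : f ≤ l := by omega
  have huniq : ∀ t ∈ S, ∀ t' ∈ S, cont t = cont t' → t = t' := by
    intro t ht t' ht' hc
    rw [← hrange] at ht ht'
    obtain ⟨i, rfl⟩ := ht
    obtain ⟨i', rfl⟩ := ht'
    rw [hcontpF i, hcontpF i'] at hc
    have : i = i' := Fin.ext (by omega)
    rw [this]
  have hcrange : ∀ t ∈ S, f ≤ cont t ∧ cont t ≤ l := by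
    intro t ht
    rw [← hrange] at ht
    obtain ⟨i, rfl⟩ := ht
    rw [hcontpF i]
    have := i.2
    omega
  have hexist : ∀ g : ℤ, f ≤ g → g ≤ l → ∃ t ∈ S, cont t = g := by
    intro g h1 h2
    have hlt : (g - f).toNat < s := by omega
    refine ⟨p ⟨(g - f).toNat, hlt⟩, by rw [← hrange]; exact ⟨_, rfl⟩, ?_⟩
    rw [hcontp _ hlt]
    omega
  -- endpoints
  set t0 := p ⟨0, hs⟩ with ht0def
  set tl := p ⟨s-1, Nat.sub_lt hs Nat.one_pos⟩ with htldef
  have ht0S : t0 ∈ S := by rw [← hrange]; exact ⟨_, rfl⟩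
  have htlS : tl ∈ S := by rw [← hrange]; exact ⟨_, rfl⟩
  obtain ⟨ha1, ha2, ha3⟩ := (hSeq t0).mp ht0S
  obtain ⟨hb1, hb2, hb3⟩ := (hSeq tl).mp htlS
  have ht0col : t0.2 = μ t0.1 := by
    by_contra hne
    have hmem : (t0.1, t0.2 + 1) ∈ S := (hSeqP _ _).mpr ⟨ha1, by omega, by omega⟩
    have h1 := (hcrange _ hmem).1
    have hc0 : cont t0 = f := hcf
    simp only [cont] at h1 hc0
    omega
  have htlcol : tl.2 = ν tl.1 + 1 := by
    by_contra hne
    have hmem : (tl.1, tl.2 - 1) ∈ S := (hSeqP _ _).mpr ⟨hb1, by omega, by omega⟩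
    have h1 := (hcrange _ hmem).2
    have hcll : cont tl = l := hcl
    simp only [cont] at h1 hcll
    omega
  have hfval : f = (t0.1 : ℤ) - μ t0.1 := by
    rw [← hcf]; simp only [cont, ht0col]
  have hlval : l = (tl.1 : ℤ) - ν tl.1 - 1 := by
    rw [← hcl]
    have : cont tl = (tl.1 : ℤ) - tl.2 := rfl
    rw [this, htlcol]
    push_cast; ring
  -- duplicate-content gadget
  have hdup : ∀ r, 1 ≤ r → ν r < μ r → ν r + 2 ≤ μ (r+1) → False := by
    intro r h1 h2 h3
    have hνr : ν (r+1) ≤ ν r := hνmono r (r+1) h1 (by omega)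
    have hm1 : (r, ν r + 1) ∈ S := (hSeqP _ _).mpr ⟨h1, by omega, by omega⟩
    have hm2 : (r+1, ν r + 2) ∈ S := (hSeqP _ _).mpr ⟨by omega, by omega, by omega⟩
    have heq := huniq _ hm1 _ hm2 (by simp only [cont]; omega)
    have : r = r + 1 := congrArg Prod.fst heq
    omega
  -- ordering of row intervals
  have hord : ∀ r r', 1 ≤ r → r < r' → ν r < μ r → ν r' < μ r' →
      (r : ℤ) - ν r - 1 < (r' : ℤ) - μ r' := by
    intro r r' h1 h2 h3 h4
    by_contra hc
    push_neg at hc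
    have hν21 : ν r' ≤ ν r := hνmono r r' h1 (by omega)
    have hm1 : (r, ν r + 1) ∈ S := (hSeqP _ _).mpr ⟨h1, by omega, by omega⟩
    have hm2 : (r', r' - r + ν r + 1) ∈ S := (hSeqP _ _).mpr ⟨by omega, by omega, by omega⟩
    have heq := huniq _ hm1 _ hm2 (by simp only [cont]; omega)
    have : r = r' := congrArg Prod.fst heq
    omega
  -- ρ ≤ σ
  have hρσ : t0.1 ≤ tl.1 := by
    by_contra hc
    push_neg at hc
    have := hord tl.1 t0.1 hb1 hc (by omega) (by omega)
    omega
  obtain ⟨k, hk⟩ : ∃ k : ℕ, tl.1 = t0.1 + k := ⟨tl.1 - t0.1, by omega⟩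
  -- next-row lemma
  have hnext : ∀ r, 1 ≤ r → ν r < μ r → (r:ℤ) - ν r ≤ l →
      ν (r+1) < μ (r+1) ∧ μ (r+1) = ν r + 1 := by
    intro r h1 h2 h3
    have hm1 : (r, ν r + 1) ∈ S := (hSeqP _ _).mpr ⟨h1, by omega, by omega⟩
    have hf1 := (hcrange _ hm1).1
    simp only [cont] at hf1
    obtain ⟨t, htS, htc⟩ := hexist ((r:ℤ) - ν r) (by omega) h3
    obtain ⟨g1, g2, g3⟩ := (hSeq t).mp htS
    have htc' : (t.1 : ℤ) - t.2 = (r:ℤ) - ν r := htc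
    rcases lt_trichotomy t.1 (r+1) with hcmp | hcmp | hcmp
    · -- t.1 ≤ r: impossible
      exfalso
      have hνr : ν r ≤ ν t.1 := hνmono t.1 r g1 (by omega)
      omega
    · -- t.1 = r+1
      have ht2 : t.2 = ν r + 1 := by omega
      have hle : ν r + 1 ≤ μ (r+1) := by rw [← hcmp, ← ht2]; exact g3
      have hge : μ (r+1) ≤ ν r + 1 := by
        by_contra hcc
        exact hdup r h1 h2 (by omega)
      constructor
      · have : ν (r+1) < t.2 := by rw [← hcmp]; exact g2
        omega
      · omega
    · -- t.1 ≥ r+2: impossible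
      exfalso
      have hμt : μ t.1 ≤ μ (r+1) := hmono (r+1) t.1 (by omega) (by omega)
      exact hdup r h1 h2 (by omega)
  -- lev values
  have hlevmin : ∀ t ∈ S, lev t0 ≤ lev t := by
    intro t ht
    rw [← hrange] at ht
    obtain ⟨i, rfl⟩ := ht
    exact hlev0 i
  have hlevmin' : ∀ t ∈ S, lev tl ≤ lev t := by
    intro t ht
    rw [← hrange] at ht
    obtain ⟨i, rfl⟩ := ht
    exact hlevl i
  have hleveq : lev t0 = lev tl := le_antisymm (hlevmin tl htlS) (hlevmin' t0 ht0S)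
  have hlev0val : lev t0 = (t0.1 : ℤ) + μ t0.1 - 1 := by
    simp only [lev, ht0col]
  have hlevlval : lev tl = (tl.1 : ℤ) + ν tl.1 := by
    simp only [lev, htlcol]; push_cast; ring
  -- rows of the band
  have hstep2 : ∀ r, t0.1 ≤ r → r < tl.1 → ν r < μ r →
      ν (r+1) < μ (r+1) ∧ μ (r+1) = ν r + 1 := by
    intro r hr1 hr2 hr3
    have h5 := hord r tl.1 (by omega) hr2 hr3 (by omega)
    exact hnext r (by omega) hr3 (by omega)
  have hrow : ∀ j, j ≤ k → ν (t0.1 + j) < μ (t0.1 + j) := by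
    intro j
    induction j with
    | zero => intro _; simpa using (by omega : ν t0.1 < μ t0.1)
    | succ j ih =>
      intro hj
      have := hstep2 (t0.1 + j) (by omega) (by omega) (ih (by omega))
      rw [show t0.1 + (j+1) = t0.1 + j + 1 from by ring]
      exact this.1
  have hμνband : ∀ j, j < k → μ (t0.1 + j + 1) = ν (t0.1 + j) + 1 := by
    intro j hj
    exact (hstep2 (t0.1 + j) (by omega) (by omega) (hrow j (by omega))).2
  -- σ ≤ n
  have hσn : tl.1 ≤ n := by
    by_contra hc
    push_neg at hc
    have := hn tl.1 hc
    omega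
  -- row σ+1 is not in the band
  have hout : μ (tl.1 + 1) ≤ ν (tl.1 + 1) := by
    by_contra hc
    push_neg at hc
    have hmem : (tl.1 + 1, ν (tl.1 + 1) + 1) ∈ S := (hSeqP _ _).mpr ⟨by omega, by omega, by omega⟩
    have h1 := (hcrange _ hmem).2
    simp only [cont] at h1
    have hν2 : ν (tl.1 + 1) ≤ ν tl.1 := hνmono tl.1 (tl.1+1) hb1 (by omega)
    omega
  -- assemble
  refine ⟨t0.1, k, ha1, by omega, hfval, ?_, ?_, ?_⟩
  · -- l = f + 2k
    rw [hlev0val, hlevlval] at hleveq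
    rw [hlval, hfval]
    omega
  · -- staircase condition
    intro j hj1 hjk
    have h7 := hμνband (j-1) (by omega)
    rw [show t0.1 + (j-1) + 1 = t0.1 + j from by omega] at h7
    have hmem : (t0.1 + (j-1), ν (t0.1 + (j-1)) + 1) ∈ S := by
      refine (hSeqP _ _).mpr ⟨by omega, by omega, ?_⟩
      have := hrow (j-1) (by omega)
      omega
    have h8 := hlevmin _ hmem
    rw [hlev0val] at h8
    simp only [lev] at h8
    omega
  · -- last condition
    have hν2 : ν (tl.1 + 1) ≤ ν tl.1 := hνmono tl.1 (tl.1+1) hb1 (by omega)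
    rw [hlev0val, hlevlval] at hleveq
    rw [show t0.1 + k + 1 = tl.1 + 1 from by omega]
    omega

section CupInfra

variable {m n : ℕ} {μ : ℕ → ℕ}

theorem conj_le (n : ℕ) (μ : ℕ → ℕ) (i : ℕ) : conj n μ i ≤ n := by
  refine le_trans (Finset.card_le_card (Finset.filter_subset _ _)) ?_
  simp [Nat.card_Icc]

theorem conj_ge (hμ : IsPtn m n μ) {r i : ℕ} (h1 : 1 ≤ r) (h2 : r ≤ n) (h3 : i ≤ μ r) :
    r ≤ conj n μ i := by
  have hsub : Finset.Icc 1 r ⊆ (Finset.Icc 1 n).filter (fun t => i ≤ μ t) := by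
    intro t ht
    simp only [Finset.mem_Icc] at ht
    simp only [Finset.mem_filter, Finset.mem_Icc]
    exact ⟨⟨ht.1, by omega⟩, le_trans h3 (hμ.1 t r ht.1 ht.2)⟩
  have := Finset.card_le_card hsub
  rwa [Nat.card_Icc, Nat.add_sub_cancel] at this

theorem conj_lt (hμ : IsPtn m n μ) {r i : ℕ} (h1 : 1 ≤ r) (h3 : μ r < i) :
    conj n μ i < r := by
  have hsub : (Finset.Icc 1 n).filter (fun t => i ≤ μ t) ⊆ Finset.Icc 1 (r-1) := by
    intro t ht
    simp only [Finset.mem_filter, Finset.mem_Icc] at ht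
    simp only [Finset.mem_Icc]
    refine ⟨ht.1.1, ?_⟩
    by_contra hc
    have := hμ.1 r t h1 (by omega)
    omega
  have h4 := Finset.card_le_card hsub
  have h5 : conj n μ i = ((Finset.Icc 1 n).filter (fun t => i ≤ μ t)).card := rfl
  rw [Nat.card_Icc] at h4
  omega

theorem updown_ne (hμ : IsPtn m n μ) {i r : ℕ} (hi1 : 1 ≤ i) (hr1 : 1 ≤ r)
    (hr2 : r ≤ n) : (m:ℤ) + 1 - i + conj n μ i ≠ (m:ℤ) + r - μ r := by
  intro he
  rcases Nat.lt_or_ge (μ r) i with hlt | hge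
  · have := conj_lt hμ hr1 hlt; omega
  · have := conj_ge hμ hr1 hr2 hge; omega

theorem cover (hμ : IsPtn m n μ) {j : ℤ} (h1 : 1 ≤ j) (h2 : j ≤ (m:ℤ) + n) :
    IsUpPt m n μ j ∨ ∃ r : ℕ, 1 ≤ r ∧ r ≤ n ∧ j = (m:ℤ) + r - μ r := by
  classical
  obtain ⟨hmono, hm, hn⟩ := hμ
  set A := (Finset.Icc 1 m).image (fun i : ℕ => (m:ℤ) + 1 - i + conj n μ i) with hA
  set B := (Finset.Icc 1 n).image (fun r : ℕ => (m:ℤ) + r - μ r) with hB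
  have hconj_anti : ∀ i i' : ℕ, i ≤ i' → conj n μ i' ≤ conj n μ i := by
    intro i i' h
    apply Finset.card_le_card
    intro t ht
    simp only [Finset.mem_filter] at ht ⊢
    exact ⟨ht.1, le_trans h ht.2⟩
  have hcardA : A.card = m := by
    rw [hA, Finset.card_image_of_injOn, Nat.card_Icc]
    · omega
    · intro i hi i' hi' he
      have he' : (m:ℤ) + 1 - i + conj n μ i = (m:ℤ) + 1 - i' + conj n μ i' := he
      simp only [Finset.mem_coe, Finset.mem_Icc] at hi hi'
      by_contra hne
      rcases Nat.lt_or_ge i i' with hlt | hge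
      · have := hconj_anti i i' (by omega); omega
      · have := hconj_anti i' i (by omega); omega
  have hcardB : B.card = n := by
    rw [hB, Finset.card_image_of_injOn, Nat.card_Icc]
    · omega
    · intro r hr r' hr' he
      have he' : (m:ℤ) + r - μ r = (m:ℤ) + r' - μ r' := he
      simp only [Finset.mem_coe, Finset.mem_Icc] at hr hr'
      by_contra hne
      rcases Nat.lt_or_ge r r' with hlt | hge
      · have := hmono r r' (by omega) (by omega); omega
      · have := hmono r' r (by omega) (by omega); omega
  have hdisjAB : Disjoint A B := by
    rw [Finset.disjoint_left]
    intro x hxA hxB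
    simp only [hA, hB, Finset.mem_image, Finset.mem_Icc] at hxA hxB
    obtain ⟨i, ⟨hi1, hi2⟩, hie⟩ := hxA
    obtain ⟨r, ⟨hr1, hr2⟩, hre⟩ := hxB
    exact updown_ne ⟨hmono, hm, hn⟩ hi1 hr1 hr2 (by omega)
  have hsub : A ∪ B ⊆ Finset.Icc (1:ℤ) (m + n) := by
    intro x hx
    simp only [Finset.mem_union, hA, hB, Finset.mem_image, Finset.mem_Icc] at hx
    simp only [Finset.mem_Icc]
    rcases hx with ⟨i, ⟨hi1, hi2⟩, hie⟩ | ⟨r, ⟨hr1, hr2⟩, hre⟩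
    · have h3 : conj n μ i ≤ n := conj_le n μ i
      omega
    · have h3 : μ r ≤ m := le_trans (hmono 1 r (le_refl 1) hr1) hm
      omega
  have hueq : A ∪ B = Finset.Icc (1:ℤ) (m+n) := by
    apply Finset.eq_of_subset_of_card_le hsub
    rw [Int.card_Icc, Finset.card_union_of_disjoint hdisjAB, hcardA, hcardB]
    omega
  have hj : j ∈ A ∪ B := by
    rw [hueq]
    simp only [Finset.mem_Icc]
    omega
  simp only [Finset.mem_union, hA, hB, Finset.mem_image, Finset.mem_Icc] at hj
  rcases hj with ⟨i, ⟨hi1, hi2⟩, hie⟩ | ⟨r, ⟨hr1, hr2⟩, hre⟩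
  · exact Or.inl ⟨i, hi1, hi2, hie.symm⟩
  · exact Or.inr ⟨r, hr1, hr2, hre.symm⟩

end CupInfra

theorem cup_iff_cond {m n : ℕ} {μ : ℕ → ℕ} {f l : ℤ} (hμ : IsPtn m n μ) :
    IsCup m n μ (f + m) (l + m + 1) ↔ Cond m n μ f l := by
  classical
  have hmono := hμ.1
  have hm := hμ.2.1
  have hn := hμ.2.2
  have hμtop : ∀ r, 1 ≤ r → μ r ≤ m := fun r h => le_trans (hmono 1 r (le_refl 1) h) hm
  have hψmono : ∀ r r' : ℕ, 1 ≤ r → r ≤ r' → (r:ℤ) - μ r ≤ (r':ℤ) - μ r' := by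
    intro r r' h1 h2; have := hmono r r' h1 h2; omega
  have hψlt : ∀ r r' : ℕ, 1 ≤ r → r < r' → (r:ℤ) - μ r < (r':ℤ) - μ r' := by
    intro r r' h1 h2; have := hmono r r' h1 (by omega); omega
  have hcount : ∀ (P : ℤ → Prop) (inst : DecidablePred P) (a b : ℤ),
      {j : ℤ | a ≤ j ∧ j ≤ b ∧ P j}.ncard = (@Finset.filter ℤ P inst (Finset.Icc a b)).card := by
    intro P inst a b
    rw [show {j : ℤ | a ≤ j ∧ j ≤ b ∧ P j} = ↑((Finset.Icc a b).filter P) by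
      ext j; simp [Finset.mem_Icc, and_assoc]]
    exact Set.ncard_coe_finset _
  have hupC : ∀ a b : ℤ, upCount m n μ a b
      = ((Finset.Icc a b).filter (fun j => IsUpPt m n μ j)).card := fun a b =>
    hcount (fun j => IsUpPt m n μ j) _ a b
  have hdownC : ∀ a b : ℤ, downCount m n μ a b
      = ((Finset.Icc a b).filter (fun j => ¬ IsUpPt m n μ j)).card := fun a b =>
    hcount (fun j => ¬ IsUpPt m n μ j) _ a b
  have htotal : ∀ a b : ℤ, upCount m n μ a b + downCount m n μ a b = (b + 1 - a).toNat := by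
    intro a b
    rw [hupC, hdownC, Finset.card_filter_add_card_filter_not, Int.card_Icc]
  set Dg : ℤ → Finset ℕ :=
    fun g => (Finset.Icc 1 n).filter (fun r => f < (r:ℤ) - (μ r : ℤ) ∧ (r:ℤ) - (μ r : ℤ) ≤ g)
    with hDgdef
  have hDgmem : ∀ g : ℤ, ∀ r : ℕ, r ∈ Dg g ↔
      1 ≤ r ∧ r ≤ n ∧ f < (r:ℤ) - (μ r : ℤ) ∧ (r:ℤ) - (μ r : ℤ) ≤ g := by
    intro g r
    simp [hDgdef, Finset.mem_filter, Finset.mem_Icc, and_assoc]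
  have hdown : ∀ g : ℤ, 1 ≤ f + (m:ℤ) + 1 → g ≤ n →
      downCount m n μ (f + (m:ℤ) + 1) ((m:ℤ) + g) = (Dg g).card := by
    intro g h1 hgn
    rw [hdownC]
    rw [show (Finset.Icc (f + (m:ℤ) + 1) ((m:ℤ) + g)).filter (fun j => ¬ IsUpPt m n μ j)
        = (Dg g).image (fun r : ℕ => (m:ℤ) + r - μ r) from ?_]
    · rw [Finset.card_image_of_injOn]
      intro r hr r' hr' he
      have he' : (m:ℤ) + r - μ r = (m:ℤ) + r' - μ r' := he
      rw [Finset.mem_coe, hDgmem] at hr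
      rw [Finset.mem_coe, hDgmem] at hr'
      by_contra hne
      rcases Nat.lt_or_ge r r' with hlt | hge
      · have := hψlt r r' hr.1 hlt; omega
      · have := hψlt r' r hr'.1 (by omega); omega
    · ext j
      simp only [Finset.mem_filter, Finset.mem_Icc, Finset.mem_image]
      constructor
      · rintro ⟨⟨hj1, hj2⟩, hnup⟩
        rcases cover hμ (show 1 ≤ j by omega) (show j ≤ (m:ℤ) + n by omega) with
          hup | ⟨r, hr1, hr2, hre⟩
        · exact absurd hup hnup
        · exact ⟨r, (hDgmem g r).mpr ⟨hr1, hr2, by omega, by omega⟩, by omega⟩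
      · rintro ⟨r, hr, hre⟩
        rw [hDgmem] at hr
        refine ⟨⟨by omega, by omega⟩, ?_⟩
        rintro ⟨i0, hi1, hi2, hie⟩
        exact updown_ne hμ hi1 hr.1 hr.2.1 (by omega)
  constructor
  · -- IsCup → Cond
    rintro ⟨h1, h2, h3, h4, h5, h6, h7⟩
    have hfl : f ≤ l := by omega
    obtain ⟨ρ, hρ1, hρn, hρe⟩ : ∃ r : ℕ, 1 ≤ r ∧ r ≤ n ∧ f + (m:ℤ) = (m:ℤ) + r - μ r := by
      rcases cover hμ h1 (by omega) with hup | hd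
      · exact absurd hup h4
      · exact hd
    have hfψ : f = (ρ:ℤ) - μ ρ := by omega
    have hgtρ : ∀ g : ℤ, ∀ r : ℕ, r ∈ Dg g → ρ < r := by
      intro g r hr
      rw [hDgmem] at hr
      by_contra hc
      have := hψmono r ρ hr.1 (by omega)
      omega
    have hdc : ∀ g : ℤ, ∀ r, r ∈ Dg g → ∀ r', ρ < r' → r' ≤ r → r' ∈ Dg g := by
      intro g r hr r' h1' h2'
      rw [hDgmem] at hr ⊢
      have ha := hψmono r' r (by omega) h2'
      have hb := hψlt ρ r' hρ1 h1'
      exact ⟨by omega, by omega, by omega, by omega⟩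
    have hmax : ∀ g : ℤ, ∀ j0 : ℕ, 1 ≤ j0 → j0 ≤ (Dg g).card → ∃ r ∈ Dg g, ρ + j0 ≤ r := by
      intro g j0 hj1 hj2
      by_contra hc
      push_neg at hc
      have hsub : Dg g ⊆ Finset.Icc (ρ+1) (ρ+j0-1) := by
        intro r hr
        have := hgtρ g r hr
        have := hc r hr
        simp only [Finset.mem_Icc]
        omega
      have := Finset.card_le_card hsub
      rw [Nat.card_Icc] at this
      omega
    -- the count at l
    have hfm1 : 1 ≤ f + (m:ℤ) + 1 := by omega
    have hln : l ≤ (n:ℤ) - 1 := by omega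
    set k := (Dg l).card with hkdef
    have h6' : upCount m n μ (f + ↑m + 1) (↑m + l) = downCount m n μ (f + ↑m + 1) (↑m + l) := by
      rw [show (m:ℤ) + l = l + ↑m + 1 - 1 by ring]
      exact h6
    have htot := htotal (f + ↑m + 1) (↑m + l)
    have hdl := hdown l hfm1 (by omega)
    have hl2 : l = f + 2 * (k:ℤ) := by
      rw [h6', hdl] at htot
      omega
    have hkn : ρ + k ≤ n := by
      rcases Nat.eq_or_lt_of_le (show 0 ≤ k by omega) with he | hlt
      · omega
      · obtain ⟨r, hr, hle⟩ := hmax l k (by omega) (le_refl _)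
        rw [hDgmem] at hr
        omega
    refine ⟨ρ, k, hρ1, hkn, hfψ, hl2, ?_, ?_⟩
    · -- staircase
      intro j hj1 hjk
      set g := f + 2 * (j:ℤ) - 1 with hgdef
      have hgl : g < l := by omega
      have h7' := h7 ((m:ℤ) + g) (by omega) (by omega)
      have htot' := htotal (f + ↑m + 1) (↑m + g)
      have hdg := hdown g hfm1 (by omega)
      have hcard : j ≤ (Dg g).card := by
        rw [← hdg]
        omega
      obtain ⟨r, hr, hle⟩ := hmax g j hj1 hcard
      rw [hDgmem] at hr
      have := hψmono (ρ + j) r (by omega) hle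
      have : ((ρ:ℤ) + j) - μ (ρ + j) ≤ g := by push_cast at this ⊢; omega
      omega
    · -- last condition
      rcases Nat.lt_or_ge n (ρ + k + 1) with hc | hc
      · have h0 := hn (ρ + k + 1) (by omega)
        omega
      · -- ρ+k+1 ≤ n
        have hnotin : (ρ + k + 1) ∉ Dg l := by
          intro hin
          have hsub : Finset.Icc (ρ+1) (ρ+k+1) ⊆ Dg l := by
            intro r' hr'
            simp only [Finset.mem_Icc] at hr'
            exact hdc l _ hin r' (by omega) (by omega)
          have := Finset.card_le_card hsub
          rw [Nat.card_Icc] at this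
          omega
        have hgt : l < ((ρ:ℤ) + k + 1) - μ (ρ + k + 1) := by
          by_contra hcc
          push_neg at hcc
          apply hnotin
          rw [hDgmem]
          have := hψlt ρ (ρ + k + 1) hρ1 (by omega)
          push_cast at this hcc ⊢
          refine ⟨?_, ?_, ?_, ?_⟩ <;> first | trivial | omega
        have hne : ((ρ:ℤ) + k + 1) - μ (ρ + k + 1) ≠ l + 1 := by
          intro he
          obtain ⟨i0, hi1, hi2, hie⟩ := h5
          exact updown_ne hμ hi1 (show 1 ≤ ρ + k + 1 by omega) hc (by push_cast; omega)
        push_cast at hgt hne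
        omega
  · -- Cond → IsCup
    rintro ⟨ρ, k, hρ1, hρk, hf, hl, hii, hiv⟩
    have hμρk : (k:ℤ) + 1 ≤ μ ρ := by
      have h0 : (0:ℤ) ≤ (μ (ρ+k+1) : ℤ) := Int.natCast_nonneg _
      omega
    have hμρm : μ ρ ≤ m := hμtop ρ hρ1
    have h1 : 1 ≤ f + (m:ℤ) := by omega
    have hl1n : l + 1 ≤ (n:ℤ) := by omega
    have h2 : l + (m:ℤ) + 1 ≤ (m:ℤ) + n := by omega
    have h3 : f + (m:ℤ) < l + (m:ℤ) + 1 := by omega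
    have h4 : ¬ IsUpPt m n μ (f + (m:ℤ)) := by
      rintro ⟨i0, hi1, hi2, hie⟩
      exact updown_ne hμ hi1 hρ1 (by omega) (by omega)
    have hψhi : ∀ j : ℕ, 1 ≤ j → j ≤ k → ((ρ:ℤ) + j) - μ (ρ + j) ≤ f + 2 * (j:ℤ) - 1 := by
      intro j hj1 hj2
      have := hii j hj1 hj2
      omega
    have hψout : ∀ r : ℕ, ρ + k + 1 ≤ r → r ≤ n → l + 2 ≤ (r:ℤ) - μ r := by
      intro r hr1 hr2
      have ha := hψmono (ρ + k + 1) r (by omega) hr1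
      push_cast at ha
      omega
    have h5 : IsUpPt m n μ (l + (m:ℤ) + 1) := by
      rcases cover hμ (show 1 ≤ l + (m:ℤ) + 1 by omega) (by omega) with hup | ⟨r, hr1, hr2, hre⟩
      · exact hup
      · exfalso
        rcases Nat.lt_or_ge (ρ + k) r with hc | hc
        · have := hψout r (by omega) hr2
          omega
        · -- r ≤ ρ + k
          rcases Nat.eq_or_lt_of_le (show 0 ≤ k from by omega) with hk0 | hk0
          · have := hψmono r ρ hr1 (by omega)
            omega
          · have ha := hψmono r (ρ + k) hr1 hc
            have hb := hψhi k (by omega) (le_refl k)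
            push_cast at ha hb
            omega
    -- counting: Dg bounds
    have hDlow : ∀ g : ℤ, ∀ j0 : ℕ, 1 ≤ j0 → j0 ≤ k → f + 2 * (j0:ℤ) - 1 ≤ g →
        j0 ≤ (Dg g).card := by
      intro g j0 hj1 hj2 hg
      have hsub : Finset.Icc (ρ+1) (ρ+j0) ⊆ Dg g := by
        intro r hr
        simp only [Finset.mem_Icc] at hr
        rw [hDgmem]
        have ha := hψlt ρ r hρ1 (by omega)
        have hb := hψmono r (ρ + (r - ρ)) (by omega) (by omega)
        have hcξ := hψhi (r - ρ) (by omega) (by omega)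
        have hd : ((ρ:ℤ) + (r - ρ : ℕ)) = (r:ℤ) := by omega
        rw [hd] at hcξ
        refine ⟨by omega, by omega, by omega, by omega⟩
      have := Finset.card_le_card hsub
      rw [Nat.card_Icc] at this
      omega
    have hDhigh : (Dg l).card ≤ k := by
      have hsub : Dg l ⊆ Finset.Icc (ρ+1) (ρ+k) := by
        intro r hr
        rw [hDgmem] at hr
        simp only [Finset.mem_Icc]
        constructor
        · by_contra hcc
          have := hψmono r ρ hr.1 (by omega)
          omega
        · by_contra hcc
          have := hψout r (by omega) hr.2.1
          omega
      have := Finset.card_le_card hsub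
      rw [Nat.card_Icc] at this
      omega
    have hfm1 : 1 ≤ f + (m:ℤ) + 1 := by omega
    have h6 : upCount m n μ (f + ↑m + 1) (l + ↑m + 1 - 1)
        = downCount m n μ (f + ↑m + 1) (l + ↑m + 1 - 1) := by
      rw [show l + (m:ℤ) + 1 - 1 = (m:ℤ) + l by ring]
      have htot := htotal (f + ↑m + 1) (↑m + l)
      have hdl := hdown l hfm1 (by omega)
      rcases Nat.eq_or_lt_of_le (show 0 ≤ k from by omega) with hk0 | hk0
      · -- k = 0 : l = f, empty range
        have hDl0 : (Dg l).card = 0 := by omega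
        rw [hdl, hDl0] at htot ⊢
        omega
      · have hDl : (Dg l).card = k :=
          le_antisymm hDhigh (hDlow l k (by omega) (le_refl k) (by omega))
        rw [hdl, hDl] at htot ⊢
        omega
    refine ⟨h1, h2, h3, h4, h5, h6, ?_⟩
    intro k' hk1 hk2
    set g := k' - (m:ℤ) with hgdef
    have hgf : f < g := by omega
    have hgl : g ≤ l := by omega
    have hkg : k' = (m:ℤ) + g := by omega
    rw [hkg]
    have htot := htotal (f + ↑m + 1) (↑m + g)
    have hdg := hdown g hfm1 (by omega)
    set d := (g - f).toNat with hddef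
    have hd1 : 1 ≤ d := by omega
    have hk1' : 1 ≤ k := by omega
    set j0 := min k ((d+1)/2) with hj0def
    have hj01 : 1 ≤ j0 := by omega
    have hj0k : j0 ≤ k := by omega
    have hj0g : f + 2 * (j0:ℤ) - 1 ≤ g := by
      have : 2 * ((d+1)/2) ≤ d + 1 := by omega
      have : j0 ≤ (d+1)/2 := by omega
      omega
    have hcard := hDlow g j0 hj01 hj0k hj0g
    have h2j0 : d ≤ 2 * j0 := by omega
    rw [hdg] at htot
    omega

theorem cup_of_cond {m n : ℕ} {μ : ℕ → ℕ} {f l : ℤ} (hμ : IsPtn m n μ)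
    (h : Cond m n μ f l) : IsCup m n μ (f + m) (l + m + 1) :=
  (cup_iff_cond hμ).mpr h

theorem cond_of_cup {m n : ℕ} {μ : ℕ → ℕ} {f l : ℤ} (hμ : IsPtn m n μ)
    (h : IsCup m n μ (f + m) (l + m + 1)) : Cond m n μ f l :=
  (cup_iff_cond hμ).mp h

/-- For a partition `μ` in the `m × n` rectangle, the removable Dyck paths of `μ` are in
bijection with the (anticlockwise) arcs (cups) in the oriented diagram `μ̲μ`: the removable
Dyck path with content interval `[f, l]` corresponds to the cup with endpoints at the points
`f + m` and `l + m + 1`. -/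
theorem stmt10 (m n : ℕ) (μ : ℕ → ℕ) (hμ : IsPtn m n μ) :
    (∀ f l : ℤ, DRem m n μ f l ↔ IsCup m n μ (f + m) (l + m + 1)) ∧
    ∃ e : {P : ℤ × ℤ // DRem m n μ P.1 P.2} ≃ {c : ℤ × ℤ // IsCup m n μ c.1 c.2},
      ∀ P, (e P).1 = (P.1.1 + m, P.1.2 + m + 1) := by
  have key : ∀ f l : ℤ, DRem m n μ f l ↔ IsCup m n μ (f + m) (l + m + 1) :=
    fun f l => ⟨fun h => cup_of_cond hμ (cond_of_drem hμ h),
                fun h => drem_of_cond hμ (cond_of_cup hμ h)⟩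
  refine ⟨key, ⟨{
    toFun := fun P => ⟨(P.1.1 + m, P.1.2 + m + 1), (key P.1.1 P.1.2).mp P.2⟩
    invFun := fun c => ⟨(c.1.1 - m, c.1.2 - m - 1), (key (c.1.1 - m) (c.1.2 - m - 1)).mpr
      (by have := c.2; convert this using 2 <;> ring)⟩
    left_inv := fun P => by ext <;> simp <;> ring
    right_inv := fun c => by ext <;> simp <;> ring }, fun P => rfl⟩⟩
end

section
/- If P is a removable Dyck path of μ with removable representative P_b, then the height ht^μ(P) equals the number of ∨ symbols to the left of position first(P) in the weight of μ minus the number of ∧ symbols to the left of first(P). -/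
open ArcPaper

namespace Stmt11Aux

lemma cont_step {a b : ℕ × ℕ} (h : IsStep a b) : cont b = cont a + 1 := by
  rcases h with h | ⟨h2, h⟩ <;> subst h <;> simp [cont] <;> omega

lemma conj_anti (n : ℕ) (μ : ℕ → ℕ) {i j : ℕ} (h : i ≤ j) : conj n μ j ≤ conj n μ i := by
  apply Finset.card_le_card
  intro r hr
  simp only [Finset.mem_filter] at *
  exact ⟨hr.1, le_trans h hr.2⟩

lemma g_inj (m n : ℕ) (μ : ℕ → ℕ) :
    Function.Injective (fun i : ℕ => (m : ℤ) + 1 - i + (conj n μ i : ℤ)) := by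
  intro i j hij
  simp only at hij
  rcases le_total i j with hle | hle <;> have := conj_anti n μ hle <;> omega

lemma upset_eq (m n : ℕ) (μ : ℕ → ℕ) (hμ : IsPtn m n μ) (r c : ℕ)
    (hr1 : 1 ≤ r) (hrn : r ≤ n) (hc1 : 1 ≤ c) (hcm : c ≤ m) (hcμ : μ r = c) :
    {j : ℤ | 1 ≤ j ∧ j ≤ (r : ℤ) - c + m - 1 ∧ IsUpPt m n μ j} =
      ↑((Finset.Icc (c + 1) m).image (fun i : ℕ => (m : ℤ) + 1 - i + (conj n μ i : ℤ))) := by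
  have hge : ∀ i : ℕ, 1 ≤ i → i ≤ c → r ≤ conj n μ i := by
    intro i hi1 hic
    have hsub : Finset.Icc 1 r ⊆ (Finset.Icc 1 n).filter (fun row => i ≤ μ row) := by
      intro row hrow
      simp only [Finset.mem_Icc, Finset.mem_filter] at *
      refine ⟨⟨hrow.1, hrow.2.trans hrn⟩, ?_⟩
      have : μ r ≤ μ row := hμ.1 row r hrow.1 hrow.2
      omega
    have := Finset.card_le_card hsub
    simpa [conj, Nat.card_Icc] using this
  have hle : ∀ i : ℕ, c < i → conj n μ i ≤ r - 1 := by
    intro i hci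
    have hsub : (Finset.Icc 1 n).filter (fun row => i ≤ μ row) ⊆ Finset.Icc 1 (r - 1) := by
      intro row hrow
      simp only [Finset.mem_Icc, Finset.mem_filter] at *
      refine ⟨hrow.1.1, ?_⟩
      by_contra hcon
      push_neg at hcon
      have : μ row ≤ μ r := hμ.1 r row hr1 (by omega)
      omega
    have := Finset.card_le_card hsub
    simpa [conj, Nat.card_Icc] using this
  ext j
  simp only [Set.mem_setOf_eq, Finset.coe_image, Set.mem_image, Finset.mem_coe,
    Finset.mem_Icc]
  constructor
  · rintro ⟨hj1, hjb, i, hi1, him, rfl⟩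
    refine ⟨i, ⟨?_, him⟩, rfl⟩
    by_contra hcon
    push_neg at hcon
    have := hge i hi1 (by omega)
    omega
  · rintro ⟨i, ⟨hci, him⟩, rfl⟩
    have h1 := hle i (by omega)
    exact ⟨by omega, by omega, i, by omega, him, rfl⟩

end Stmt11Aux

open Stmt11Aux

/-- If `P` is a removable Dyck path of `μ` with removable representative of first content `f`
and height `h = ht^μ(P)`, then `h` equals the number of `∨` symbols strictly to the left of
the point `f + m` (corresponding to `first(P)`) in the weight of `μ`, minus the number of `∧`
symbols strictly to the left of that point. -/
theorem stmt11 (m n : ℕ) (μ : ℕ → ℕ) (hμ : IsPtn m n μ)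
    (f l h : ℤ) (hrem : DRemH m n μ f l h) :
    h = (downCount m n μ 1 (f + m - 1) : ℤ) - (upCount m n μ 1 (f + m - 1) : ℤ) := by
  obtain ⟨ν, S, hdyck, hSsub, hνptn, hνdiag⟩ := hrem
  obtain ⟨s, hs, p, hinj, hrange, hstep, hmin0, hminl, hf, hl, hh⟩ := hdyck
  -- contents increase along the path
  have hcont : ∀ i : Fin s, cont (p i) = f + i.1 := by
    rintro ⟨i, hi⟩
    induction i with
    | zero => simpa using hf
    | succ k ih =>
      have hk : k < s := Nat.lt_of_succ_lt hi
      have hstep' := cont_step (hstep ⟨k, hk⟩ hi)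
      rw [hstep', ih hk]
      push_cast
      ring
  set r := (p ⟨0, hs⟩).1 with hrdef
  set c := (p ⟨0, hs⟩).2 with hcdef
  have ht0S : p ⟨0, hs⟩ ∈ S := by rw [← hrange]; exact Set.mem_range_self _
  have ht0μ : p ⟨0, hs⟩ ∈ diagram μ := hSsub ht0S
  have hr1 : 1 ≤ r := ht0μ.1
  have hc1 : 1 ≤ c := ht0μ.2.1
  have hcμ : c ≤ μ r := ht0μ.2.2
  have hf' : (r : ℤ) - (c : ℤ) = f := hf
  have hh' : (r : ℤ) + (c : ℤ) - 1 - (m : ℤ) = h := hh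
  -- every tile of S has content ≥ f
  have hSlb : ∀ t ∈ S, f ≤ cont t := by
    intro t ht
    rw [← hrange] at ht
    obtain ⟨i, rfl⟩ := ht
    rw [hcont i]
    have : (0 : ℤ) ≤ (i.1 : ℤ) := by positivity
    omega
  -- the first tile is at the end of its row
  have hceq : μ r = c := by
    by_contra hne
    have hlt : c < μ r := lt_of_le_of_ne hcμ (fun e => hne e.symm)
    have ht'μ : ((r, c + 1) : ℕ × ℕ) ∈ diagram μ := ⟨hr1, Nat.le_add_left 1 c, hlt⟩
    have ht'S : ((r, c + 1) : ℕ × ℕ) ∉ S := by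
      intro hmem
      have hcc : f ≤ (r : ℤ) - ((c + 1 : ℕ) : ℤ) := hSlb _ hmem
      push_cast at hcc
      omega
    have ht'ν : ((r, c + 1) : ℕ × ℕ) ∈ diagram ν := by
      rw [hνdiag]; exact ⟨ht'μ, ht'S⟩
    have h3 : c + 1 ≤ ν r := ht'ν.2.2
    have htν : ((r, c) : ℕ × ℕ) ∈ diagram ν := ⟨hr1, hc1, Nat.le_of_succ_le h3⟩
    rw [hνdiag] at htν
    exact htν.2 ht0S
  have hrn : r ≤ n := by
    by_contra hcon
    push_neg at hcon
    have := hμ.2.2 r hcon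
    omega
  have hcm : c ≤ m := by
    have h1 : μ r ≤ μ 1 := hμ.1 1 r le_rfl hr1
    have h2 : μ 1 ≤ m := hμ.2.1
    omega
  -- counting
  have hup : upCount m n μ 1 ((r : ℤ) - c + m - 1) = m - c := by
    rw [upCount, upset_eq m n μ hμ r c hr1 hrn hc1 hcm hceq, Set.ncard_coe_finset,
      Finset.card_image_of_injOn ((g_inj m n μ).injOn), Nat.card_Icc]
    omega
  have hupsub : {j : ℤ | 1 ≤ j ∧ j ≤ (r : ℤ) - c + m - 1 ∧ IsUpPt m n μ j} ⊆
      Set.Icc 1 ((r : ℤ) - c + m - 1) := by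
    rintro j ⟨h1, h2, _⟩
    exact ⟨h1, h2⟩
  have hdownset : {j : ℤ | 1 ≤ j ∧ j ≤ (r : ℤ) - c + m - 1 ∧ ¬ IsUpPt m n μ j} =
      Set.Icc 1 ((r : ℤ) - c + m - 1) \
        {j : ℤ | 1 ≤ j ∧ j ≤ (r : ℤ) - c + m - 1 ∧ IsUpPt m n μ j} := by
    ext j
    simp only [Set.mem_setOf_eq, Set.mem_diff, Set.mem_Icc]
    tauto
  have hIcc : (Set.Icc (1 : ℤ) ((r : ℤ) - c + m - 1)).ncard = ((r : ℤ) - c + m - 1).toNat := by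
    rw [← Finset.coe_Icc, Set.ncard_coe_finset, Int.card_Icc]
    omega
  have hdown : downCount m n μ 1 ((r : ℤ) - c + m - 1) =
      ((r : ℤ) - c + m - 1).toNat - (m - c) := by
    rw [downCount, hdownset, Set.ncard_diff hupsub ((Set.finite_Icc _ _).subset hupsub), hIcc]
    rw [show {j : ℤ | 1 ≤ j ∧ j ≤ (r : ℤ) - c + m - 1 ∧ IsUpPt m n μ j}.ncard
        = upCount m n μ 1 ((r : ℤ) - c + m - 1) from rfl, hup]
  rw [show f + (m : ℤ) - 1 = (r : ℤ) - c + m - 1 by omega, hup, hdown]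
  omega
end

section
/- If P and Q are removable Dyck paths of μ with P ≺ Q (Q covers P) that do not commute, then Q \ P decomposes as a disjoint union Q^1 ⊔ Q^2 of exactly two Dyck paths, both removable from μ - P, with Q^1 entirely to the left of P and Q^2 entirely to the right of P. -/
open ArcPaper

/-!
A removable Dyck path is determined by its content interval: it consists of the tiles of the
outer rim of `μ` with those contents. Hence `P` is the segment of `Q` over `[first P, last P]`,
and `Q` enters `P` by a down step and leaves it by a left step. If `P` lies at most one level
above the ends of `Q`, the two pieces of `Q \ P` are Dyck paths on the rim of `μ - P`, hence
removable from it. Otherwise every tile of `P` is at least two rows and two columns from the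
border, so pushing the `P`-segment of `Q` one tile diagonally inwards gives a Dyck path
removable from `μ - P`, and pushing `P` itself gives one removable from `μ - Q`: `P` and `Q`
would commute.
-/

namespace ArcPaper

variable {m n : ℕ} {μ ν : ℕ → ℕ} {f l : ℤ} {B : ℤ → ℕ × ℕ}

lemma IsPtn.apply_le (hμ : IsPtn m n μ) {r : ℕ} (hr : 1 ≤ r) : μ r ≤ m :=
  (hμ.1 1 r le_rfl hr).trans hμ.2.1

lemma IsPtn.mem_diagram_of_le (hμ : IsPtn m n μ) {t s : ℕ × ℕ}
    (ht : t ∈ diagram μ) (hs₁ : 1 ≤ s.1) (hs₂ : 1 ≤ s.2) (h₁ : s.1 ≤ t.1) (h₂ : s.2 ≤ t.2) :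
    s ∈ diagram μ :=
  ⟨hs₁, hs₂, h₂.trans (ht.2.2.trans (hμ.1 _ _ hs₁ h₁))⟩

lemma exists_isPtn_diagram_eq (hμ : IsPtn m n μ) {A : Set (ℕ × ℕ)}
    (hA : A ⊆ diagram μ) (hup : ∀ r c, 1 ≤ r → (r + 1, c) ∈ A → (r, c) ∈ A)
    (hleft : ∀ r c, 1 ≤ c → (r, c + 1) ∈ A → (r, c) ∈ A) :
    ∃ ν, IsPtn m n ν ∧ diagram ν = A := by
  classical
  have hrow : ∀ r c r', 1 ≤ r → r ≤ r' → (r', c) ∈ A → (r, c) ∈ A := by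
    intro r c r' hr hrr'
    induction r', hrr' using Nat.le_induction with
    | base => exact id
    | succ r' hrr' ih => exact fun h => ih (hup r' c (hr.trans hrr') h)
  have hcol : ∀ r c c', 1 ≤ c → c ≤ c' → (r, c') ∈ A → (r, c) ∈ A := by
    intro r c c' hc hcc'
    induction c', hcc' using Nat.le_induction with
    | base => exact id
    | succ c' hcc' ih => exact fun h => ih (hleft r c' (hc.trans hcc') h)
  refine ⟨fun r => Nat.findGreatest (fun c => (r, c) ∈ A) m,
    ⟨fun i j hi hij => Nat.findGreatest_mono_left (fun c => hrow i c j hi hij) m,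
      Nat.findGreatest_le m, fun r hr => ?_⟩, ?_⟩
  · refine Nat.findGreatest_eq_zero_iff.2 fun c hc _ hrc => ?_
    have := (hA hrc).2.2
    rw [hμ.2.2 r hr] at this
    omega
  · ext ⟨r, c⟩
    refine ⟨fun ⟨hr, hc, hcg⟩ => hcol r c _ hc hcg
      (Nat.findGreatest_of_ne_zero rfl (Nat.one_le_iff_ne_zero.1 (hc.trans hcg))),
      fun h => ⟨(hA h).1, (hA h).2.1, ?_⟩⟩
    exact Nat.le_findGreatest ((hA h).2.2.trans (hμ.apply_le (hA h).1)) h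

lemma isStep_iff {a b : ℕ × ℕ} :
    IsStep a b ↔ (b.1 = a.1 + 1 ∧ b.2 = a.2) ∨ (2 ≤ a.2 ∧ b.1 = a.1 ∧ b.2 + 1 = a.2) := by
  unfold IsStep
  constructor
  · rintro (rfl | ⟨h, rfl⟩)
    · exact Or.inl ⟨rfl, rfl⟩
    · exact Or.inr ⟨h, rfl, by simp only; omega⟩
  · rintro (⟨h₁, h₂⟩ | ⟨h, h₁, h₂⟩)
    · exact Or.inl (Prod.ext h₁ h₂)
    · exact Or.inr ⟨h, Prod.ext h₁ (by simp only; omega)⟩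

lemma cont_of_isStep {a b : ℕ × ℕ} (h : IsStep a b) : cont b = cont a + 1 := by
  rcases isStep_iff.1 h with ⟨h₁, h₂⟩ | ⟨-, h₁, h₂⟩ <;> simp only [cont] <;> omega

/-- A Dyck path indexed by content: `B k` is its tile of content `k`, for `f ≤ k ≤ l`. -/
structure IsDyckPath (f l : ℤ) (B : ℤ → ℕ × ℕ) : Prop where
  le : f ≤ l
  cont_eq : ∀ k, f ≤ k → k ≤ l → cont (B k) = k
  step : ∀ k, f ≤ k → k < l → IsStep (B k) (B (k + 1))
  lev_first_le : ∀ k, f ≤ k → k ≤ l → lev (B f) ≤ lev (B k)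
  lev_last_le : ∀ k, f ≤ k → k ≤ l → lev (B l) ≤ lev (B k)

namespace IsDyckPath

lemma mem_image (hB : IsDyckPath f l B) {t : ℕ × ℕ} (ht : t ∈ B '' Set.Icc f l) :
    f ≤ cont t ∧ cont t ≤ l ∧ B (cont t) = t := by
  obtain ⟨k, ⟨hfk, hkl⟩, rfl⟩ := ht
  rw [hB.cont_eq k hfk hkl]
  exact ⟨hfk, hkl, rfl⟩

lemma fst_le_and_snd_le (hB : IsDyckPath f l B) {i j : ℤ} (hfi : f ≤ i) (hij : i ≤ j)
    (hjl : j ≤ l) : (B i).1 ≤ (B j).1 ∧ (B j).2 ≤ (B i).2 := by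
  induction j, hij using Int.leInduction with
  | base => exact ⟨le_rfl, le_rfl⟩
  | succ j hij ih =>
    have hstep := isStep_iff.1 (hB.step j (hfi.trans hij) (by omega))
    have := ih (by omega)
    omega

lemma mono (hB : IsDyckPath f l B) {f' l' : ℤ} (hf : f ≤ f') (hfl : f' ≤ l') (hl : l' ≤ l)
    (hfirst : ∀ k, f' ≤ k → k ≤ l' → lev (B f') ≤ lev (B k))
    (hlast : ∀ k, f' ≤ k → k ≤ l' → lev (B l') ≤ lev (B k)) : IsDyckPath f' l' B where
  le := hfl
  cont_eq k h₁ h₂ := hB.cont_eq k (hf.trans h₁) (h₂.trans hl)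
  step k h₁ h₂ := hB.step k (hf.trans h₁) (h₂.trans_le hl)
  lev_first_le := hfirst
  lev_last_le := hlast

lemma congr (hB : IsDyckPath f l B) {B' : ℤ → ℕ × ℕ} (h : ∀ k, f ≤ k → k ≤ l → B k = B' k) :
    IsDyckPath f l B' where
  le := hB.le
  cont_eq k h₁ h₂ := h k h₁ h₂ ▸ hB.cont_eq k h₁ h₂
  step k h₁ h₂ := h k h₁ h₂.le ▸ h (k + 1) (by omega) h₂ ▸ hB.step k h₁ h₂
  lev_first_le k h₁ h₂ := h f le_rfl hB.le ▸ h k h₁ h₂ ▸ hB.lev_first_le k h₁ h₂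
  lev_last_le k h₁ h₂ := h l hB.le le_rfl ▸ h k h₁ h₂ ▸ hB.lev_last_le k h₁ h₂

lemma isDyckRep_image (hB : IsDyckPath f l B) (m : ℕ) :
    IsDyckRep m (B '' Set.Icc f l) f l (lev (B f) - m) := by
  have hs : 0 < (l - f + 1).toNat := by have := hB.le; omega
  have hmem : ∀ i : Fin (l - f + 1).toNat, f ≤ f + i ∧ f + i ≤ l := fun i => by
    have := i.2
    omega
  have hlast : f + ((l - f + 1).toNat - 1 : ℕ) = l := by have := hB.le; omega
  refine ⟨_, hs, fun i => B (f + i), fun i j hij => ?_, ?_, fun i hi => ?_,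
    fun i => ?_, fun i => ?_, ?_, ?_, by simp⟩
  · have := congrArg cont hij
    rw [hB.cont_eq _ (hmem i).1 (hmem i).2, hB.cont_eq _ (hmem j).1 (hmem j).2] at this
    exact Fin.ext (by omega)
  · ext t
    refine ⟨fun ⟨i, hi⟩ => ⟨f + i, hmem i, hi⟩, fun ⟨k, ⟨h₁, h₂⟩, hk⟩ => ?_⟩
    exact ⟨⟨(k - f).toNat, by omega⟩,
      (congrArg B (by omega : f + ((k - f).toNat : ℤ) = k)).trans hk⟩
  · have := hB.step (f + i) (hmem i).1 (by omega)
    simpa [add_assoc] using this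
  · simpa using hB.lev_first_le _ (hmem i).1 (hmem i).2
  · simpa [hlast] using hB.lev_last_le _ (hmem i).1 (hmem i).2
  · simpa using hB.cont_eq f le_rfl hB.le
  · simpa [hlast] using hB.cont_eq l hB.le le_rfl

end IsDyckPath

lemma IsDyckRep.exists_isDyckPath {S : Set (ℕ × ℕ)} {h : ℤ}
    (hS : IsDyckRep m S f l h) : ∃ B, IsDyckPath f l B ∧ B '' Set.Icc f l = S := by
  obtain ⟨s, hs, p, -, rfl, hstep, hfirst, hlast, hf, hl, -⟩ := hS
  have hcont : ∀ i : Fin s, cont (p i) = f + i := by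
    rintro ⟨i, hi⟩
    induction i with
    | zero => simpa using hf
    | succ i ih =>
      rw [cont_of_isStep (hstep ⟨i, by omega⟩ hi), ih (by omega)]
      push_cast
      ring
  have hl' : l = f + (s - 1 : ℕ) := by rw [← hl, hcont]
  set B : ℤ → ℕ × ℕ := fun k => p ⟨(k - f).toNat % s, Nat.mod_lt _ hs⟩
  have hB : ∀ k (i : Fin s), k = f + i → B k = p i := by
    rintro k ⟨i, hi⟩ rfl
    simp only [B, add_sub_cancel_left, Int.toNat_natCast, Nat.mod_eq_of_lt hi]
  have hidx : ∀ k, f ≤ k → k ≤ l → ∃ i : Fin s, k = f + i :=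
    fun k h₁ h₂ => ⟨⟨(k - f).toNat, by omega⟩, by simp only; omega⟩
  refine ⟨B, ⟨by omega, fun k h₁ h₂ => ?_, fun k h₁ h₂ => ?_, fun k h₁ h₂ => ?_,
    fun k h₁ h₂ => ?_⟩, ?_⟩
  · obtain ⟨i, rfl⟩ := hidx k h₁ h₂
    rw [hB _ i rfl, hcont]
  · obtain ⟨i, rfl⟩ := hidx k h₁ h₂.le
    rw [hB _ i rfl, hB _ ⟨i + 1, by omega⟩ (by simp only; push_cast; ring)]
    exact hstep i _
  · obtain ⟨i, rfl⟩ := hidx k h₁ h₂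
    rw [hB _ i rfl, hB f ⟨0, hs⟩ (by simp)]
    exact hfirst i
  · obtain ⟨i, rfl⟩ := hidx k h₁ h₂
    rw [hB _ i rfl, hB l ⟨s - 1, by omega⟩ hl']
    exact hlast i
  · ext t
    refine ⟨fun ⟨k, ⟨h₁, h₂⟩, hk⟩ => ?_, fun ⟨i, hi⟩ => ⟨f + i, ⟨by omega, ?_⟩, hB _ i rfl ▸ hi⟩⟩
    · obtain ⟨i, rfl⟩ := hidx k h₁ h₂
      exact ⟨i, (hB _ i rfl).symm.trans hk⟩
    · have := i.2
      omega

/-- The tiles of `B` lie on the outer rim of `μ`, and the path cannot be prolonged to the right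
at its start or downwards at its end. For a Dyck path this is equivalent to removability. -/
structure IsRimPath (μ : ℕ → ℕ) (f l : ℤ) (B : ℤ → ℕ × ℕ) : Prop where
  mem : ∀ k, f ≤ k → k ≤ l → B k ∈ diagram μ
  diag_notMem : ∀ k, f ≤ k → k ≤ l → ((B k).1 + 1, (B k).2 + 1) ∉ diagram μ
  first_right_notMem : ((B f).1, (B f).2 + 1) ∉ diagram μ
  last_below_notMem : ((B l).1 + 1, (B l).2) ∉ diagram μ

lemma IsPtn.eq_of_cont_eq (hμ : IsPtn m n μ) {t t' : ℕ × ℕ} (ht : t ∈ diagram μ)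
    (ht' : t' ∈ diagram μ) (hd : (t.1 + 1, t.2 + 1) ∉ diagram μ)
    (hd' : (t'.1 + 1, t'.2 + 1) ∉ diagram μ) (hc : cont t = cont t') : t = t' := by
  simp only [cont] at hc
  rcases lt_trichotomy t.1 t'.1 with h | h | h
  · exact absurd (hμ.mem_diagram_of_le ht' (by omega) (by omega) (by omega) (by omega)) hd
  · exact Prod.ext h (by omega)
  · exact absurd (hμ.mem_diagram_of_le ht (by omega) (by omega) (by omega) (by omega)) hd'

namespace IsRimPath

lemma congr (hR : IsRimPath μ f l B) (hfl : f ≤ l) {B' : ℤ → ℕ × ℕ}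
    (h : ∀ k, f ≤ k → k ≤ l → B k = B' k) : IsRimPath μ f l B' where
  mem k h₁ h₂ := h k h₁ h₂ ▸ hR.mem k h₁ h₂
  diag_notMem k h₁ h₂ := h k h₁ h₂ ▸ hR.diag_notMem k h₁ h₂
  first_right_notMem := h f le_rfl hfl ▸ hR.first_right_notMem
  last_below_notMem := h l hfl le_rfl ▸ hR.last_below_notMem

lemma apply_eq (hμ : IsPtn m n μ) (hB : IsDyckPath f l B) (hR : IsRimPath μ f l B)
    {f' l' : ℤ} {B' : ℤ → ℕ × ℕ} (hB' : IsDyckPath f' l' B') (hR' : IsRimPath μ f' l' B')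
    {k : ℤ} (h₁ : f ≤ k) (h₂ : k ≤ l) (h₁' : f' ≤ k) (h₂' : k ≤ l') : B k = B' k :=
  hμ.eq_of_cont_eq (hR.mem k h₁ h₂) (hR'.mem k h₁' h₂') (hR.diag_notMem k h₁ h₂)
    (hR'.diag_notMem k h₁' h₂') (by rw [hB.cont_eq k h₁ h₂, hB'.cont_eq k h₁' h₂'])

lemma below_mem_image (hB : IsDyckPath f l B) (hR : IsRimPath μ f l B) {k : ℤ} (h₁ : f ≤ k)
    (h₂ : k ≤ l) (h : ((B k).1 + 1, (B k).2) ∈ diagram μ) :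
    ((B k).1 + 1, (B k).2) ∈ B '' Set.Icc f l := by
  obtain h₂ | rfl := h₂.lt_or_eq
  · rcases isStep_iff.1 (hB.step k h₁ h₂) with ⟨e₁, e₂⟩ | ⟨-, e₁, e₂⟩
    · exact ⟨k + 1, ⟨by omega, by omega⟩, Prod.ext e₁ e₂⟩
    · refine absurd h ?_
      convert hR.diag_notMem (k + 1) (by omega) (by omega) using 3 <;> omega
  · exact absurd h hR.last_below_notMem

lemma right_mem_image (hB : IsDyckPath f l B) (hR : IsRimPath μ f l B) {k : ℤ} (h₁ : f ≤ k)
    (h₂ : k ≤ l) (h : ((B k).1, (B k).2 + 1) ∈ diagram μ) :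
    ((B k).1, (B k).2 + 1) ∈ B '' Set.Icc f l := by
  obtain h₁ | rfl := h₁.lt_or_eq
  · have hstep := hB.step (k - 1) (by omega) (by omega)
    rw [sub_add_cancel] at hstep
    rcases isStep_iff.1 hstep with ⟨e₁, e₂⟩ | ⟨-, e₁, e₂⟩
    · refine absurd h ?_
      convert hR.diag_notMem (k - 1) (by omega) (by omega) using 3
      omega
    · exact ⟨k - 1, ⟨by omega, by omega⟩, Prod.ext e₁.symm (by simp only; omega)⟩
  · exact absurd h hR.first_right_notMem

end IsRimPath

theorem drem_of_isRimPath (hμ : IsPtn m n μ) (hB : IsDyckPath f l B) (hR : IsRimPath μ f l B) :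
    DRem m n μ f l := by
  obtain ⟨ν, hν, hνdiag⟩ := exists_isPtn_diagram_eq hμ (A := diagram μ \ B '' Set.Icc f l)
    Set.sdiff_subset
    (fun r c hr ⟨hrc, hS⟩ => ⟨hμ.mem_diagram_of_le hrc hr hrc.2.1 (by simp) le_rfl, by
      rintro ⟨k, hk, hkt⟩
      have e : (r + 1, c) = ((B k).1 + 1, (B k).2) := by rw [hkt]
      rw [e] at hrc hS
      exact hS (hR.below_mem_image hB hk.1 hk.2 hrc)⟩)
    (fun r c hc ⟨hrc, hS⟩ => ⟨hμ.mem_diagram_of_le hrc hrc.1 hc le_rfl (by simp), by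
      rintro ⟨k, hk, hkt⟩
      have e : (r, c + 1) = ((B k).1, (B k).2 + 1) := by rw [hkt]
      rw [e] at hrc hS
      exact hS (hR.right_mem_image hB hk.1 hk.2 hrc)⟩)
  exact ⟨ν, _, _, hB.isDyckRep_image m,
    Set.image_subset_iff.2 fun k hk => hR.mem k hk.1 hk.2, hν, hνdiag⟩

theorem Removes.exists_isRimPath (h : Removes m n μ f l ν) :
    ∃ B, IsDyckPath f l B ∧ IsRimPath μ f l B ∧ IsPtn m n ν ∧
      diagram ν = diagram μ \ B '' Set.Icc f l := by
  obtain ⟨_, S, hS, hSμ, hν, hνdiag⟩ := h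
  obtain ⟨B, hB, rfl⟩ := hS.exists_isDyckPath
  have hmem : ∀ k, f ≤ k → k ≤ l → B k ∈ diagram μ := fun k h₁ h₂ => hSμ ⟨k, ⟨h₁, h₂⟩, rfl⟩
  -- `ν` is a partition not containing `B k`, so it contains nothing weakly below and right of it
  have hcont_mem : ∀ k, f ≤ k → k ≤ l → ∀ t ∈ diagram μ, (B k).1 ≤ t.1 → (B k).2 ≤ t.2 →
      f ≤ cont t ∧ cont t ≤ l ∧ B (cont t) = t := by
    intro k h₁ h₂ t ht hr hc
    refine hB.mem_image (by_contra fun hS => ?_)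
    have hBk := hν.mem_diagram_of_le (hνdiag ▸ ⟨ht, hS⟩) (hmem k h₁ h₂).1 (hmem k h₁ h₂).2.1 hr hc
    exact (hνdiag ▸ hBk).2 ⟨k, ⟨h₁, h₂⟩, rfl⟩
  have hcont := hB.cont_eq
  refine ⟨B, hB, ⟨hmem, fun k h₁ h₂ hd => ?_, fun hd => ?_, fun hd => ?_⟩, hν, hνdiag⟩
  · obtain ⟨-, -, e⟩ := hcont_mem k h₁ h₂ _ hd (by simp) (by simp)
    have hc : cont ((B k).1 + 1, (B k).2 + 1) = k := by
      have hk := hcont k h₁ h₂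
      simp only [cont] at hk ⊢
      push_cast
      omega
    have := congrArg Prod.fst (hc ▸ e)
    simp only at this
    omega
  · have := (hcont_mem f le_rfl hB.le _ hd le_rfl (by simp)).1
    have hf := hcont f le_rfl hB.le
    simp only [cont] at this hf
    omega
  · have := (hcont_mem l hB.le le_rfl _ hd (by simp) le_rfl).2.1
    have hl := hcont l hB.le le_rfl
    simp only [cont] at this hl
    omega

theorem DRem.le (h : DRem m n μ f l) : f ≤ l :=
  let ⟨_, hν⟩ := h
  let ⟨_, hB, _⟩ := hν.exists_isRimPath
  hB.le

lemma IsDyckPath.lev_last_eq (hB : IsDyckPath f l B) : lev (B l) = lev (B f) :=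
  le_antisymm (hB.lev_last_le f le_rfl hB.le) (hB.lev_first_le l hB.le le_rfl)

lemma IsDyckPath.diagShift (hB : IsDyckPath f l B)
    (h2 : ∀ k, f ≤ k → k ≤ l → 2 ≤ (B k).1 ∧ 2 ≤ (B k).2) :
    IsDyckPath f l fun k => ((B k).1 - 1, (B k).2 - 1) where
  le := hB.le
  cont_eq k h₁ h₂ := by
    have hk := hB.cont_eq k h₁ h₂
    have := h2 k h₁ h₂
    simp only [cont] at hk ⊢
    omega
  step k h₁ h₂ := by
    have := isStep_iff.1 (hB.step k h₁ h₂)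
    have := h2 k h₁ h₂.le
    have := h2 (k + 1) (by omega) h₂
    rw [isStep_iff]
    omega
  lev_first_le k h₁ h₂ := by
    have hk := hB.lev_first_le k h₁ h₂
    have := h2 f le_rfl hB.le
    have := h2 k h₁ h₂
    simp only [lev] at hk ⊢
    omega
  lev_last_le k h₁ h₂ := by
    have hk := hB.lev_last_le k h₁ h₂
    have := h2 l hB.le le_rfl
    have := h2 k h₁ h₂
    simp only [lev] at hk ⊢
    omega

lemma IsDyckPath.diagShift_mem {a b k : ℤ} (hμ : IsPtn m n μ) (hB : IsDyckPath a b B)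
    (hνdiag : diagram ν = diagram μ \ B '' Set.Icc a b) (h₁ : a ≤ k) (h₂ : k ≤ b)
    (hk : B k ∈ diagram μ) (h2 : 2 ≤ (B k).1 ∧ 2 ≤ (B k).2) :
    ((B k).1 - 1, (B k).2 - 1) ∈ diagram ν := by
  rw [hνdiag]
  refine ⟨hμ.mem_diagram_of_le hk (by simp only; omega) (by simp only; omega)
    (Nat.sub_le _ _) (Nat.sub_le _ _), fun h => ?_⟩
  have hc : cont ((B k).1 - 1, (B k).2 - 1) = k := by
    have := hB.cont_eq k h₁ h₂
    simp only [cont] at this ⊢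
    omega
  have := congrArg Prod.fst (hc ▸ (hB.mem_image h).2.2)
  simp only at this
  omega

/-- `B` traces both `Q = [q₁, q₂]` and `P = [p₁, p₂] ≺ Q`, each removable from `μ`. -/
structure IsCoveringPair (μ : ℕ → ℕ) (p₁ p₂ q₁ q₂ : ℤ) (B : ℤ → ℕ × ℕ) : Prop where
  outer : IsDyckPath q₁ q₂ B
  outer_rim : IsRimPath μ q₁ q₂ B
  inner : IsDyckPath p₁ p₂ B
  inner_rim : IsRimPath μ p₁ p₂ B
  first_lt : q₁ < p₁
  last_lt : p₂ < q₂

def pushIn (p₁ p₂ : ℤ) (B : ℤ → ℕ × ℕ) (k : ℤ) : ℕ × ℕ :=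
  if p₁ ≤ k ∧ k ≤ p₂ then ((B k).1 - 1, (B k).2 - 1) else B k

variable {p₁ p₂ q₁ q₂ : ℤ}

lemma pushIn_of_mem {k : ℤ} (h₁ : p₁ ≤ k) (h₂ : k ≤ p₂) :
    pushIn p₁ p₂ B k = ((B k).1 - 1, (B k).2 - 1) :=
  if_pos ⟨h₁, h₂⟩

lemma pushIn_of_notMem {k : ℤ} (h : k < p₁ ∨ p₂ < k) : pushIn p₁ p₂ B k = B k :=
  if_neg (by omega)

namespace IsCoveringPair

lemma step_down_to_first (hC : IsCoveringPair μ p₁ p₂ q₁ q₂ B) :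
    (B p₁).1 = (B (p₁ - 1)).1 + 1 ∧ (B p₁).2 = (B (p₁ - 1)).2 := by
  have := hC.first_lt
  have := hC.last_lt
  have := hC.inner.le
  have hstep := hC.outer.step (p₁ - 1) (by omega) (by omega)
  rw [sub_add_cancel] at hstep
  rcases isStep_iff.1 hstep with h | ⟨-, e₁, e₂⟩
  · exact h
  · have e : B (p₁ - 1) = ((B p₁).1, (B p₁).2 + 1) := Prod.ext e₁.symm (by omega)
    exact absurd (e ▸ hC.outer_rim.mem (p₁ - 1) (by omega) (by omega))
      hC.inner_rim.first_right_notMem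

lemma step_left_from_last (hC : IsCoveringPair μ p₁ p₂ q₁ q₂ B) :
    2 ≤ (B p₂).2 ∧ (B (p₂ + 1)).1 = (B p₂).1 ∧ (B (p₂ + 1)).2 + 1 = (B p₂).2 := by
  have := hC.first_lt
  have := hC.last_lt
  have := hC.inner.le
  rcases isStep_iff.1 (hC.outer.step p₂ (by omega) (by omega)) with ⟨e₁, e₂⟩ | h
  · have e : B (p₂ + 1) = ((B p₂).1 + 1, (B p₂).2) := Prod.ext e₁ e₂
    exact absurd (e ▸ hC.outer_rim.mem (p₂ + 1) (by omega) (by omega))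
      hC.inner_rim.last_below_notMem
  · exact h

lemma apply_mem_of_notMem (hC : IsCoveringPair μ p₁ p₂ q₁ q₂ B)
    (hνdiag : diagram ν = diagram μ \ B '' Set.Icc p₁ p₂) {k : ℤ} (h₁ : q₁ ≤ k) (h₂ : k ≤ q₂)
    (hk : k < p₁ ∨ p₂ < k) : B k ∈ diagram ν := by
  rw [hνdiag]
  refine ⟨hC.outer_rim.mem k h₁ h₂, fun h => ?_⟩
  obtain ⟨h₁', h₂', -⟩ := hC.inner.mem_image h
  rw [hC.outer.cont_eq k h₁ h₂] at h₁' h₂'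
  omega

lemma drem_left_of_lev_le (hC : IsCoveringPair μ p₁ p₂ q₁ q₂ B) (hν : IsPtn m n ν)
    (hνdiag : diagram ν = diagram μ \ B '' Set.Icc p₁ p₂) (hlev : lev (B p₁) ≤ lev (B q₁) + 1) :
    DRem m n ν q₁ (p₁ - 1) := by
  have hνμ : diagram ν ⊆ diagram μ := hνdiag ▸ Set.sdiff_subset
  have := hC.first_lt
  have := hC.last_lt
  have := hC.inner.le
  obtain ⟨e₁, e₂⟩ := hC.step_down_to_first
  have hQ := hC.outer
  refine drem_of_isRimPath hν (hQ.mono le_rfl (by omega) (by omega)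
    (fun k h₁ h₂ => hQ.lev_first_le k h₁ (by omega)) fun k h₁ h₂ => ?_)
    ⟨fun k h₁ h₂ => hC.apply_mem_of_notMem hνdiag h₁ (by omega) (by omega),
      fun k h₁ h₂ hk => hC.outer_rim.diag_notMem k h₁ (by omega) (hνμ hk),
      fun hk => hC.outer_rim.first_right_notMem (hνμ hk), fun hk => ?_⟩
  · have := hQ.lev_first_le k h₁ (by omega)
    simp only [lev] at this hlev ⊢
    omega
  · rw [hνdiag] at hk
    exact hk.2 ⟨p₁, ⟨le_rfl, by omega⟩, Prod.ext e₁ e₂⟩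

lemma drem_right_of_lev_le (hC : IsCoveringPair μ p₁ p₂ q₁ q₂ B) (hν : IsPtn m n ν)
    (hνdiag : diagram ν = diagram μ \ B '' Set.Icc p₁ p₂) (hlev : lev (B p₁) ≤ lev (B q₁) + 1) :
    DRem m n ν (p₂ + 1) q₂ := by
  have hνμ : diagram ν ⊆ diagram μ := hνdiag ▸ Set.sdiff_subset
  have := hC.first_lt
  have := hC.last_lt
  have := hC.inner.le
  obtain ⟨-, e₁, e₂⟩ := hC.step_left_from_last
  have hQ := hC.outer
  have hP₂ := hC.inner.lev_last_eq
  have hQ₂ := hQ.lev_last_eq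
  refine drem_of_isRimPath hν (hQ.mono (by omega) (by omega) le_rfl (fun k h₁ h₂ => ?_)
    fun k h₁ h₂ => hQ.lev_last_le k (by omega) h₂)
    ⟨fun k h₁ h₂ => hC.apply_mem_of_notMem hνdiag (by omega) h₂ (by omega),
      fun k h₁ h₂ hk => hC.outer_rim.diag_notMem k (by omega) h₂ (hνμ hk),
      fun hk => ?_, fun hk => hC.outer_rim.last_below_notMem (hνμ hk)⟩
  · have := hQ.lev_first_le k (by omega) h₂
    simp only [lev] at this hlev hP₂ hQ₂ ⊢
    omega
  · rw [hνdiag] at hk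
    exact hk.2 ⟨p₂, ⟨by omega, le_rfl⟩, Prod.ext e₁.symm (by simp only; omega)⟩

lemma two_le_fst_and_snd (hC : IsCoveringPair μ p₁ p₂ q₁ q₂ B)
    (hlev : lev (B q₁) + 2 ≤ lev (B p₁)) {k : ℤ}
    (h₁ : p₁ ≤ k) (h₂ : k ≤ p₂) : 2 ≤ (B k).1 ∧ 2 ≤ (B k).2 := by
  have := hC.first_lt
  have := hC.last_lt
  have hQ := hC.outer
  have hk := hC.inner.lev_first_le k h₁ h₂
  have hQ₂ := hQ.lev_last_eq
  have h₁' := hQ.fst_le_and_snd_le le_rfl (by omega : q₁ ≤ k) (by omega)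
  have h₂' := hQ.fst_le_and_snd_le (by omega : q₁ ≤ k) (by omega : k ≤ q₂) le_rfl
  have := (hC.outer_rim.mem q₁ le_rfl hQ.le).1
  have := (hC.outer_rim.mem q₂ hQ.le le_rfl).2.1
  simp only [lev] at hlev hk hQ₂
  omega

lemma isDyckPath_pushIn_inner (hC : IsCoveringPair μ p₁ p₂ q₁ q₂ B)
    (hlev : lev (B q₁) + 2 ≤ lev (B p₁)) : IsDyckPath p₁ p₂ (pushIn p₁ p₂ B) :=
  (hC.inner.diagShift fun _ h₁ h₂ => hC.two_le_fst_and_snd hlev h₁ h₂).congr fun _ h₁ h₂ =>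
    (pushIn_of_mem h₁ h₂).symm

lemma isRimPath_pushIn_inner (hμ : IsPtn m n μ) (hC : IsCoveringPair μ p₁ p₂ q₁ q₂ B)
    (hlev : lev (B q₁) + 2 ≤ lev (B p₁)) (hνdiag : diagram ν = diagram μ \ B '' Set.Icc q₁ q₂) :
    IsRimPath ν p₁ p₂ (pushIn p₁ p₂ B) := by
  have := hC.first_lt
  have := hC.last_lt
  have hP := hC.inner.le
  have hnot : ∀ k, q₁ ≤ k → k ≤ q₂ → ∀ t, B k = t → t ∉ diagram ν := by
    rintro k h₁ h₂ _ rfl hk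
    exact (hνdiag ▸ hk).2 ⟨k, ⟨h₁, h₂⟩, rfl⟩
  have h2 := fun k (h₁ : p₁ ≤ k) (h₂ : k ≤ p₂) => hC.two_le_fst_and_snd hlev h₁ h₂
  refine IsRimPath.congr ⟨fun k h₁ h₂ => hC.outer.diagShift_mem hμ hνdiag (by omega) (by omega)
      (hC.inner_rim.mem k h₁ h₂) (h2 k h₁ h₂),
    fun k h₁ h₂ => hnot k (by omega) (by omega) _ (Prod.ext ?_ ?_), ?_, ?_⟩ hP
    fun k h₁ h₂ => (pushIn_of_mem h₁ h₂).symm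
  · have := h2 k h₁ h₂
    simp only
    omega
  · have := h2 k h₁ h₂
    simp only
    omega
  · obtain ⟨e₁, e₂⟩ := hC.step_down_to_first
    have := h2 p₁ le_rfl hP
    exact hnot (p₁ - 1) (by omega) (by omega) _ (Prod.ext (by simp only; omega)
      (by simp only; omega))
  · obtain ⟨-, e₁, e₂⟩ := hC.step_left_from_last
    have := h2 p₂ hP le_rfl
    exact hnot (p₂ + 1) (by omega) (by omega) _ (Prod.ext (by simp only; omega)
      (by simp only; omega))

lemma isStep_pushIn (hC : IsCoveringPair μ p₁ p₂ q₁ q₂ B) (hlev : lev (B q₁) + 2 ≤ lev (B p₁))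
    {k : ℤ} (h₁ : q₁ ≤ k) (h₂ : k < q₂) :
    IsStep (pushIn p₁ p₂ B k) (pushIn p₁ p₂ B (k + 1)) := by
  have hP := hC.inner.le
  obtain hk | hk | hk | hk | hk :
      k + 1 < p₁ ∨ k + 1 = p₁ ∨ (p₁ ≤ k ∧ k < p₂) ∨ k = p₂ ∨ p₂ < k := by omega
  · rw [pushIn_of_notMem (by omega), pushIn_of_notMem (by omega)]
    exact hC.outer.step k h₁ h₂
  · obtain rfl : k = p₁ - 1 := by omega
    obtain ⟨e₁, e₂⟩ := hC.step_down_to_first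
    have := hC.two_le_fst_and_snd hlev le_rfl hP
    rw [sub_add_cancel, pushIn_of_notMem (by omega), pushIn_of_mem le_rfl hP, isStep_iff]
    simp only
    omega
  · exact (hC.isDyckPath_pushIn_inner hlev).step k hk.1 hk.2
  · rw [hk]
    obtain ⟨-, e₁, e₂⟩ := hC.step_left_from_last
    have := hC.two_le_fst_and_snd hlev hP le_rfl
    rw [pushIn_of_mem hP le_rfl, pushIn_of_notMem (by omega), isStep_iff]
    simp only
    omega
  · rw [pushIn_of_notMem (by omega), pushIn_of_notMem (by omega)]
    exact hC.outer.step k h₁ h₂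

lemma isDyckPath_pushIn_outer (hC : IsCoveringPair μ p₁ p₂ q₁ q₂ B)
    (hlev : lev (B q₁) + 2 ≤ lev (B p₁)) : IsDyckPath q₁ q₂ (pushIn p₁ p₂ B) := by
  have := hC.first_lt
  have := hC.last_lt
  have hQ := hC.outer
  have hq₁ : pushIn p₁ p₂ B q₁ = B q₁ := pushIn_of_notMem (by omega)
  have hq₂ : pushIn p₁ p₂ B q₂ = B q₂ := pushIn_of_notMem (by omega)
  -- pushing a tile in lowers its level by `2`
  have hlev_in : ∀ k, p₁ ≤ k → k ≤ p₂ → lev (B q₁) ≤ lev (pushIn p₁ p₂ B k) := by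
    intro k h₁ h₂
    have := hC.two_le_fst_and_snd hlev h₁ h₂
    have hk := hC.inner.lev_first_le k h₁ h₂
    rw [pushIn_of_mem h₁ h₂]
    simp only [lev] at hlev hk ⊢
    omega
  refine ⟨hQ.le, fun k h₁ h₂ => ?_, fun k h₁ h₂ => hC.isStep_pushIn hlev h₁ h₂,
    fun k h₁ h₂ => ?_, fun k h₁ h₂ => ?_⟩
  · by_cases hk : p₁ ≤ k ∧ k ≤ p₂
    · exact (hC.isDyckPath_pushIn_inner hlev).cont_eq k hk.1 hk.2
    · rw [pushIn_of_notMem (by omega)]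
      exact hQ.cont_eq k h₁ h₂
  · rw [hq₁]
    by_cases hk : p₁ ≤ k ∧ k ≤ p₂
    · exact hlev_in k hk.1 hk.2
    · rw [pushIn_of_notMem (by omega)]
      exact hQ.lev_first_le k h₁ h₂
  · rw [hq₂, hQ.lev_last_eq]
    by_cases hk : p₁ ≤ k ∧ k ≤ p₂
    · exact hlev_in k hk.1 hk.2
    · rw [pushIn_of_notMem (by omega)]
      exact hQ.lev_first_le k h₁ h₂

lemma isRimPath_pushIn_outer (hμ : IsPtn m n μ) (hC : IsCoveringPair μ p₁ p₂ q₁ q₂ B)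
    (hlev : lev (B q₁) + 2 ≤ lev (B p₁)) (hνdiag : diagram ν = diagram μ \ B '' Set.Icc p₁ p₂) :
    IsRimPath ν q₁ q₂ (pushIn p₁ p₂ B) := by
  have hνμ : diagram ν ⊆ diagram μ := hνdiag ▸ Set.sdiff_subset
  have := hC.first_lt
  have := hC.last_lt
  refine ⟨fun k h₁ h₂ => ?_, fun k h₁ h₂ => ?_, ?_, ?_⟩
  · by_cases hk : p₁ ≤ k ∧ k ≤ p₂
    · rw [pushIn_of_mem hk.1 hk.2]
      exact hC.inner.diagShift_mem hμ hνdiag hk.1 hk.2 (hC.outer_rim.mem k h₁ h₂)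
        (hC.two_le_fst_and_snd hlev hk.1 hk.2)
    · rw [pushIn_of_notMem (by omega)]
      exact hC.apply_mem_of_notMem hνdiag h₁ h₂ (by omega)
  · by_cases hk : p₁ ≤ k ∧ k ≤ p₂
    · have := hC.two_le_fst_and_snd hlev hk.1 hk.2
      rw [pushIn_of_mem hk.1 hk.2, hνdiag]
      exact fun h => h.2 ⟨k, hk, Prod.ext (by simp only; omega) (by simp only; omega)⟩
    · rw [pushIn_of_notMem (by omega)]
      exact fun h => hC.outer_rim.diag_notMem k h₁ h₂ (hνμ h)
  · rw [pushIn_of_notMem (by omega)]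
    exact fun h => hC.outer_rim.first_right_notMem (hνμ h)
  · rw [pushIn_of_notMem (by omega)]
    exact fun h => hC.outer_rim.last_below_notMem (hνμ h)

end IsCoveringPair

end ArcPaper

/-- If `P` and `Q` are removable Dyck paths of `μ` with `P ≺ Q` (`Q` covers `P`) that do not
commute, then `Q \ P` decomposes as a disjoint union of exactly two Dyck paths `Q¹ ⊔ Q²`,
both removable from `μ - P`, with `Q¹` (content interval `[first(Q), first(P) - 1]`) entirely
to the left of `P` and `Q²` (content interval `[last(P) + 1, last(Q)]`) entirely to the right
of `P`. -/
theorem stmt12 (m n : ℕ) (μ : ℕ → ℕ) (hμ : IsPtn m n μ) (P Q : ℤ × ℤ)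
    (hP : DRem m n μ P.1 P.2) (hQ : DRem m n μ Q.1 Q.2)
    (hcov : DyckLt P Q)
    (hnc : ¬ DyckCommute m n μ P Q) :
    (Set.Icc Q.1 Q.2 \ Set.Icc P.1 P.2 =
      Set.Icc Q.1 (P.1 - 1) ∪ Set.Icc (P.2 + 1) Q.2) ∧
    ∀ ν, Removes m n μ P.1 P.2 ν →
      DRem m n ν Q.1 (P.1 - 1) ∧ DRem m n ν (P.2 + 1) Q.2 := by
  refine ⟨Set.ext fun x => ?_, fun ν hν => ?_⟩
  · simp only [Set.mem_sdiff, Set.mem_Icc, Set.mem_union]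
    have := hP.le
    have := hcov.1
    have := hcov.2
    omega
  obtain ⟨BP, hBP, hRP, hνptn, hνdiag⟩ := hν.exists_isRimPath
  obtain ⟨νQ, hνQ⟩ := hQ
  obtain ⟨B, hB, hR, hνQptn, hνQdiag⟩ := hνQ.exists_isRimPath
  have hagree : ∀ k, P.1 ≤ k → k ≤ P.2 → BP k = B k := fun k h₁ h₂ =>
    hRP.apply_eq hμ hBP hB hR h₁ h₂ (hcov.1.le.trans h₁) (h₂.trans hcov.2.le)
  have hC : IsCoveringPair μ P.1 P.2 Q.1 Q.2 B :=
    ⟨hB, hR, hBP.congr hagree, hRP.congr hBP.le hagree, hcov.1, hcov.2⟩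
  rw [Set.EqOn.image_eq fun k hk => hagree k hk.1 hk.2] at hνdiag
  by_cases hlev : lev (B P.1) ≤ lev (B Q.1) + 1
  · exact ⟨hC.drem_left_of_lev_le hνptn hνdiag hlev, hC.drem_right_of_lev_le hνptn hνdiag hlev⟩
  · replace hlev : lev (B Q.1) + 2 ≤ lev (B P.1) := by omega
    exact absurd ⟨⟨ν, hν, drem_of_isRimPath hνptn (hC.isDyckPath_pushIn_outer hlev)
      (hC.isRimPath_pushIn_outer hμ hlev hνdiag)⟩, ⟨νQ, hνQ, drem_of_isRimPath hνQptn
      (hC.isDyckPath_pushIn_inner hlev) (hC.isRimPath_pushIn_inner hμ hlev hνQdiag)⟩⟩ hnc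
end
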